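/- arXiv:math/0104102 — 7 statements merged into one kernel-verified Lean document; each statement's English description precedes it below -/
import Mathlib

section
/- Let E be a finite-dimensional real inner product space and let A, B be subspaces (submodules over ℝ) of E. Define C := A ⊓ B, J := A ⊔ B, D := J ⊓ Cᗮ (the orthogonal complement of the meet inside the join), and M := (J ⊓ Bᗮ) ⊔ C. Then for every x ∈ E, 2 • (the orthogonal projection of x onto C, viewed in E) = (the orthogonal projection of x onto B) − (the orthogonal projection of x onto D) + (the orthogonal projection of x onto M). In other words, the orthogonal projection onto the meet A ⊓ B equals ½(P_B − P_D + P_M). -/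
open Module

lemma orthogonalProjection_congr'
    {E : Type*} [NormedAddCommGroup E] [InnerProductSpace ℝ E] [FiniteDimensional ℝ E]
    {S T : Submodule ℝ E} (h : S = T) (x : E) :
    (Submodule.orthogonalProjectionOnto S x : E) = (Submodule.orthogonalProjectionOnto T x : E) := by subst h; rfl

lemma orthogonalProjection_sup_of_orthogonal
    {E : Type*} [NormedAddCommGroup E] [InnerProductSpace ℝ E] [FiniteDimensional ℝ E]
    (S T : Submodule ℝ E) (hST : T ≤ Sᗮ) (x : E) :
    (Submodule.orthogonalProjectionOnto (S ⊔ T) x : E) =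
      (Submodule.orthogonalProjectionOnto S x : E) + (Submodule.orthogonalProjectionOnto T x : E) := by
  have hTS : S ≤ Tᗮ := fun s hs => by
    rw [Submodule.mem_orthogonal]
    intro t ht
    exact (Submodule.mem_orthogonal' _ _).1 (hST ht) s hs
  apply Submodule.eq_starProjection_of_mem_orthogonal
  · exact Submodule.add_mem_sup (Submodule.orthogonalProjectionOnto S x).2 (Submodule.orthogonalProjectionOnto T x).2
  · rw [← Submodule.inf_orthogonal]
    constructor
    · have h1 : x - (Submodule.orthogonalProjectionOnto S x : E) ∈ Sᗮ :=
        Submodule.sub_starProjection_mem_orthogonal x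
      have h2 : (Submodule.orthogonalProjectionOnto T x : E) ∈ Sᗮ := hST (Submodule.orthogonalProjectionOnto T x).2
      have := Sᗮ.sub_mem h1 h2
      simpa [sub_sub] using this
    · have h1 : x - (Submodule.orthogonalProjectionOnto T x : E) ∈ Tᗮ :=
        Submodule.sub_starProjection_mem_orthogonal x
      have h2 : (Submodule.orthogonalProjectionOnto S x : E) ∈ Tᗮ := hTS (Submodule.orthogonalProjectionOnto S x).2
      have := Tᗮ.sub_mem h1 h2
      have heq : x - (Submodule.orthogonalProjectionOnto T x : E) - (Submodule.orthogonalProjectionOnto S x : E)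
          = x - ((Submodule.orthogonalProjectionOnto S x : E) + (Submodule.orthogonalProjectionOnto T x : E)) := by abel
      rwa [heq] at this

/-- The orthogonal projection onto the meet `A ⊓ B` equals `½(P_B − P_D + P_M)`,
where `D` is the orthogonal complement of the meet inside the join and
`M = ((A ⊔ B) ⊓ Bᗮ) ⊔ (A ⊓ B)`. -/
theorem meet_projection_formula
    (E : Type*) [NormedAddCommGroup E] [InnerProductSpace ℝ E] [FiniteDimensional ℝ E]
    (A B : Submodule ℝ E) :
    ∀ x : E,
      (2 : ℝ) • (Submodule.orthogonalProjectionOnto (A ⊓ B) x : E) =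
        (Submodule.orthogonalProjectionOnto B x : E)
          - (Submodule.orthogonalProjectionOnto ((A ⊔ B) ⊓ (A ⊓ B)ᗮ) x : E)
          + (Submodule.orthogonalProjectionOnto (((A ⊔ B) ⊓ Bᗮ) ⊔ (A ⊓ B)) x : E) := by
  intro x
  set C := A ⊓ B
  set J := A ⊔ B
  -- J = C ⊔ (J ⊓ Cᗮ) and the two parts are orthogonal
  have hCJ : C ≤ J := le_trans inf_le_left le_sup_left
  have hBJ : B ≤ J := le_sup_right
  have h1 : C ⊔ (Cᗮ ⊓ J) = J := Submodule.sup_orthogonal_inf_of_hasOrthogonalProjection hCJ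
  have h2 : B ⊔ (Bᗮ ⊓ J) = J := Submodule.sup_orthogonal_inf_of_hasOrthogonalProjection hBJ
  have e1 : (Submodule.orthogonalProjectionOnto J x : E) =
      (Submodule.orthogonalProjectionOnto C x : E) + (Submodule.orthogonalProjectionOnto (Cᗮ ⊓ J) x : E) :=
    (orthogonalProjection_congr' h1.symm x).trans
      (orthogonalProjection_sup_of_orthogonal C (Cᗮ ⊓ J) inf_le_left x)
  have e2 : (Submodule.orthogonalProjectionOnto J x : E) =
      (Submodule.orthogonalProjectionOnto B x : E) + (Submodule.orthogonalProjectionOnto (Bᗮ ⊓ J) x : E) :=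
    (orthogonalProjection_congr' h2.symm x).trans
      (orthogonalProjection_sup_of_orthogonal B (Bᗮ ⊓ J) inf_le_left x)
  have e3 : (Submodule.orthogonalProjectionOnto ((J ⊓ Bᗮ) ⊔ C) x : E) =
      (Submodule.orthogonalProjectionOnto (J ⊓ Bᗮ) x : E) + (Submodule.orthogonalProjectionOnto C x : E) := by
    apply orthogonalProjection_sup_of_orthogonal
    intro c hc
    rw [Submodule.mem_orthogonal]
    intro t ht
    exact (Submodule.mem_orthogonal' _ _).1 ht.2 c hc.2
  rw [orthogonalProjection_congr' (inf_comm J Cᗮ) x, e3,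
    orthogonalProjection_congr' (inf_comm J Bᗮ) x,
    eq_sub_of_add_eq e1.symm, eq_sub_of_add_eq e2.symm, two_smul]
  abel
end

section
/- Let E be a finite-dimensional real inner product space and let A, B be subspaces (submodules over ℝ) of E. Define C := A ⊓ B, J := A ⊔ B, D := J ⊓ Cᗮ, and M := (J ⊓ Bᗮ) ⊔ C. Then for every x ∈ E, 2 • (the orthogonal projection of x onto J, viewed in E) = (the orthogonal projection of x onto B) + (the orthogonal projection of x onto D) + (the orthogonal projection of x onto M). In other words, the orthogonal projection onto the join A ⊔ B equals ½(P_B + P_D + P_M). -/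
open Module

private lemma proj_sup_of_isOrtho
    {E : Type*} [NormedAddCommGroup E] [InnerProductSpace ℝ E] [FiniteDimensional ℝ E]
    {S T : Submodule ℝ E} (h : S ⟂ T) (x : E) :
    (Submodule.orthogonalProjection (S ⊔ T) x : E) =
      (Submodule.orthogonalProjection S x : E) + (Submodule.orthogonalProjection T x : E) := by
  apply Submodule.eq_starProjection_of_mem_orthogonal
  · exact Submodule.add_mem_sup (Submodule.orthogonalProjection S x).2 (Submodule.orthogonalProjection T x).2
  · rw [← Submodule.inf_orthogonal]
    constructor
    · have h1 : x - Submodule.orthogonalProjection S x ∈ Sᗮ := Submodule.sub_starProjection_mem_orthogonal x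
      have h2 : (Submodule.orthogonalProjection T x : E) ∈ Sᗮ := h.ge (Submodule.orthogonalProjection T x).2
      have := Sᗮ.sub_mem h1 h2
      convert this using 1; abel_nf; exact Iff.rfl
    · have h1 : x - Submodule.orthogonalProjection T x ∈ Tᗮ := Submodule.sub_starProjection_mem_orthogonal x
      have h2 : (Submodule.orthogonalProjection S x : E) ∈ Tᗮ := h.le (Submodule.orthogonalProjection S x).2
      have := Tᗮ.sub_mem h1 h2
      convert this using 1; abel_nf; exact Iff.rfl

private lemma proj_split_of_le
    {E : Type*} [NormedAddCommGroup E] [InnerProductSpace ℝ E] [FiniteDimensional ℝ E]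
    {S T : Submodule ℝ E} (h : S ≤ T) (x : E) :
    (Submodule.orthogonalProjection T x : E) =
      (Submodule.orthogonalProjection S x : E) + (Submodule.orthogonalProjection (T ⊓ Sᗮ) x : E) := by
  have key : S ⊔ (T ⊓ Sᗮ) = T := by
    rw [inf_comm]; exact Submodule.sup_orthogonal_inf_of_hasOrthogonalProjection h
  have ho : S ⟂ (T ⊓ Sᗮ) := (Submodule.isOrtho_orthogonal_right S).mono_right inf_le_right
  apply Submodule.eq_starProjection_of_mem_orthogonal
  · exact T.add_mem (h (Submodule.orthogonalProjection S x).2)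
      ((inf_le_left : T ⊓ Sᗮ ≤ T) (Submodule.orthogonalProjection (T ⊓ Sᗮ) x).2)
  · have mem : x - ((Submodule.orthogonalProjection S x : E) + (Submodule.orthogonalProjection (T ⊓ Sᗮ) x : E))
        ∈ Sᗮ ⊓ (T ⊓ Sᗮ)ᗮ := by
      constructor
      · have h1 : x - Submodule.orthogonalProjection S x ∈ Sᗮ := Submodule.sub_starProjection_mem_orthogonal x
        have h2 : (Submodule.orthogonalProjection (T ⊓ Sᗮ) x : E) ∈ Sᗮ :=
          (inf_le_right : T ⊓ Sᗮ ≤ Sᗮ) (Submodule.orthogonalProjection (T ⊓ Sᗮ) x).2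
        have := Sᗮ.sub_mem h1 h2
        convert this using 1; abel_nf; exact Iff.rfl
      · have h1 : x - Submodule.orthogonalProjection (T ⊓ Sᗮ) x ∈ (T ⊓ Sᗮ)ᗮ :=
          Submodule.sub_starProjection_mem_orthogonal x
        have h2 : (Submodule.orthogonalProjection S x : E) ∈ (T ⊓ Sᗮ)ᗮ := ho.le (Submodule.orthogonalProjection S x).2
        have := (T ⊓ Sᗮ)ᗮ.sub_mem h1 h2
        convert this using 1; abel_nf; exact Iff.rfl
    rw [Submodule.inf_orthogonal, key] at mem
    exact mem

/-- The orthogonal projection onto the join `A ⊔ B` equals `½(P_B + P_D + P_M)`,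
where `D` is the orthogonal complement of the meet inside the join and
`M = ((A ⊔ B) ⊓ Bᗮ) ⊔ (A ⊓ B)`. -/
theorem join_projection_formula
    (E : Type*) [NormedAddCommGroup E] [InnerProductSpace ℝ E] [FiniteDimensional ℝ E]
    (A B : Submodule ℝ E) :
    ∀ x : E,
      (2 : ℝ) • (Submodule.orthogonalProjection (A ⊔ B) x : E) =
        (Submodule.orthogonalProjection B x : E)
          + (Submodule.orthogonalProjection ((A ⊔ B) ⊓ (A ⊓ B)ᗮ) x : E)
          + (Submodule.orthogonalProjection (((A ⊔ B) ⊓ Bᗮ) ⊔ (A ⊓ B)) x : E) := by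
  intro x
  set J := A ⊔ B
  set C := A ⊓ B
  have hCJ : C ≤ J := le_trans inf_le_left le_sup_left
  have hBJ : B ≤ J := le_sup_right
  have h1 := proj_split_of_le hCJ x
  have h2 := proj_split_of_le hBJ x
  have ho : (J ⊓ Bᗮ) ⟂ C := (Submodule.isOrtho_orthogonal_right B).symm.mono inf_le_right inf_le_right
  have h3 := proj_sup_of_isOrtho ho x
  rw [two_smul, h3]
  nth_rewrite 1 [h1]
  nth_rewrite 1 [h2]
  abel
end

section
/- Let E be a finite-dimensional real inner product space and let A, B be subspaces of E, with C := A ⊓ B. Then the orthogonal complement of the meet inside the join decomposes as (A ⊔ B) ⊓ Cᗮ = (A ⊓ Cᗮ) ⊔ (B ⊓ Cᗮ). Equivalently, every vector x in the join A ⊔ B that is orthogonal to every vector of C can be written as x = a₀ + b₀ where a₀ ∈ A is orthogonal to C and b₀ ∈ B is orthogonal to C, and conversely every such sum lies in (A ⊔ B) ⊓ Cᗮ. -/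
/-!
If `K` is a complement of `C` in a modular lattice and `C ≤ A`, then `A = C ⊔ (A ⊓ K)` by the
modular law. Applying this to `A` and `B` gives `A ⊔ B = ((A ⊓ K) ⊔ (B ⊓ K)) ⊔ C`, and since the
first summand lies below `K` while `C ⊓ K = ⊥`, the modular law once more yields
`(A ⊔ B) ⊓ K = (A ⊓ K) ⊔ (B ⊓ K)`. For subspaces, `(A ⊓ B)ᗮ` is such a complement of `A ⊓ B`.
-/

namespace IsCompl

variable {α : Type*} [Lattice α] [BoundedOrder α] [IsModularLattice α] {A B C K : α}

theorem sup_inf_eq_of_le (hK : IsCompl C K) (hA : C ≤ A) : C ⊔ A ⊓ K = A := by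
  rw [inf_comm, ← sup_inf_assoc_of_le K hA, hK.sup_eq_top, top_inf_eq]

theorem sup_inf_eq_sup_inf_sup_inf (hK : IsCompl C K) (hA : C ≤ A) (hB : C ≤ B) :
    (A ⊔ B) ⊓ K = A ⊓ K ⊔ B ⊓ K := by
  have hAB : A ⊔ B = (A ⊓ K ⊔ B ⊓ K) ⊔ C := by
    conv_lhs => rw [← hK.sup_inf_eq_of_le hA, ← hK.sup_inf_eq_of_le hB]
    rw [sup_sup_sup_comm, sup_idem, sup_comm]
  rw [hAB, sup_inf_assoc_of_le C (sup_le inf_le_right inf_le_right), hK.inf_eq_bot, sup_bot_eq]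

end IsCompl

/-- The orthogonal complement of the meet inside the join decomposes as
`(A ⊔ B) ⊓ (A ⊓ B)ᗮ = (A ⊓ (A ⊓ B)ᗮ) ⊔ (B ⊓ (A ⊓ B)ᗮ)`. -/
theorem symmDiff_decomposition
    (E : Type*) [NormedAddCommGroup E] [InnerProductSpace ℝ E] [FiniteDimensional ℝ E]
    (A B : Submodule ℝ E) :
    (A ⊔ B) ⊓ (A ⊓ B)ᗮ = (A ⊓ (A ⊓ B)ᗮ) ⊔ (B ⊓ (A ⊓ B)ᗮ) :=
  (A ⊓ B).isCompl_orthogonal.sup_inf_eq_sup_inf_sup_inf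
    inf_le_left inf_le_right
end

section
/- Let E := EuclideanSpace ℝ (Fin n) with its standard positive-definite quadratic form Q x = ‖x‖², and let Cl(Q) be the associated Clifford algebra with canonical embedding ι : E → Cl(Q). Let 𝒜 and ℬ be subspaces of E with ℬ ≤ 𝒜, let b : Fin s → E be an orthogonal basis of ℬ (pairwise orthogonal, each nonzero, spanning ℬ, s = dim ℬ), and let v : Fin t → E be an orthogonal basis of 𝒜 (t = dim 𝒜). Set B := ι(b 0) * ι(b 1) * ⋯ * ι(b (s−1)) and A := ι(v 0) * ⋯ * ι(v (t−1)) (ordered products in Cl(Q)). Then B is a unit of Cl(Q), and there exist a nonzero real number β and an orthogonal basis a : Fin (t−s) → E of 𝒜 ⊓ ℬᗮ such that B⁻¹ * A = β • (ι(a 0) * ι(a 1) * ⋯ * ι(a (t−s−1))). In particular B⁻¹A is a blade characterizing the difference subspace 𝒜 \ ℬ = 𝒜 ⊓ ℬᗮ. -/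
open CliffordAlgebra Module

private lemma aux_ofFn_cast {α : Type*} {m k : ℕ} (h : k = m) (f : Fin m → α) :
    (List.ofFn fun i : Fin k => f (Fin.cast h i)) = List.ofFn f := by
  subst h; rfl

private lemma aux_orth_li {n k : ℕ} (u : Fin k → EuclideanSpace ℝ (Fin n))
    (horth : ∀ i j, i ≠ j → (inner ℝ (u i) (u j) : ℝ) = 0) (hne : ∀ i, u i ≠ 0) :
    LinearIndependent ℝ u := by
  rw [Fintype.linearIndependent_iff]
  intro g hg i
  have h2 : (inner ℝ (u i) (∑ j, g j • u j) : ℝ) = 0 := by rw [hg, inner_zero_right]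
  rw [inner_sum] at h2
  simp_rw [real_inner_smul_right] at h2
  rw [Finset.sum_eq_single i (fun j _ hj => by rw [horth i j (Ne.symm hj), mul_zero])
    (fun h => absurd (Finset.mem_univ i) h)] at h2
  rcases mul_eq_zero.mp h2 with h | h
  · exact h
  · exact absurd h (inner_self_ne_zero.mpr (hne i))

private lemma aux_prod_unit {M : Type*} [Monoid M] :
    ∀ l : List M, (∀ x ∈ l, IsUnit x) → IsUnit l.prod
  | [], _ => by simp
  | x :: xs, h => by
    rw [List.prod_cons]
    exact (h x (List.mem_cons_self)).mul
      (aux_prod_unit xs fun y hy => h y (List.mem_cons_of_mem _ hy))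

private lemma aux_contract {n : ℕ} (Q' : QuadraticForm ℝ (EuclideanSpace ℝ (Fin n)))
    (d : Module.Dual ℝ (EuclideanSpace ℝ (Fin n))) :
    ∀ l : List (EuclideanSpace ℝ (Fin n)), (∀ x ∈ l, d x = 0) →
      contractLeft (Q := Q') d (l.map (ι Q')).prod = 0
  | [], _ => by simp
  | x :: xs, h => by
    rw [List.map_cons, List.prod_cons, contractLeft_ι_mul,
      aux_contract Q' d xs (fun y hy => h y (List.mem_cons_of_mem _ hy)),
      h x (List.mem_cons_self)]
    simp

private lemma aux_changeForm {n : ℕ} {Q Q' : QuadraticForm ℝ (EuclideanSpace ℝ (Fin n))}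
    {B : LinearMap.BilinForm ℝ (EuclideanSpace ℝ (Fin n))}
    (h : B.toQuadraticMap = Q' - Q) :
    ∀ l : List (EuclideanSpace ℝ (Fin n)), (l.Pairwise fun x y => B x y = 0) →
      changeForm h (l.map (ι Q)).prod = (l.map (ι Q')).prod
  | [], _ => by simp
  | x :: xs, hp => by
    rw [List.map_cons, List.prod_cons, changeForm_ι_mul,
      aux_changeForm h xs (List.Pairwise.of_cons hp),
      aux_contract Q' (B x) xs (fun y hy => (List.pairwise_cons.mp hp).1 y hy),
      sub_zero, List.map_cons, List.prod_cons]

private lemma aux_alt_det {V N : Type*} [AddCommGroup V] [Module ℝ V]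
    [AddCommGroup N] [Module ℝ N] {m : ℕ} (e : Basis (Fin m) ℝ V)
    (F : V [⋀^Fin m]→ₗ[ℝ] N) (x : Fin m → V) :
    F x = e.det x • F ⇑e := by
  classical
  have key : F = (LinearMap.toSpanSingleton ℝ _ (F ⇑e)).compAlternatingMap e.det := by
    refine Basis.ext_alternating e ?_
    intro g hg
    have hgb : Function.Bijective g := Finite.injective_iff_bijective.mp hg
    have h1 : (fun i => e (g i)) = ⇑e ∘ ⇑(Equiv.ofBijective g hgb) := rfl
    rw [h1, F.map_perm ⇑e (Equiv.ofBijective g hgb), LinearMap.compAlternatingMap_apply,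
      AlternatingMap.map_perm, Basis.det_self, LinearMap.toSpanSingleton_apply]
    rcases Int.units_eq_one_or (Equiv.Perm.sign (Equiv.ofBijective g hgb)) with hσ | hσ <;>
      simp [hσ]
  have h2 := DFunLike.congr_fun key x
  rw [LinearMap.compAlternatingMap_apply, LinearMap.toSpanSingleton_apply] at h2
  exact h2

private lemma aux_assoc {n : ℕ} {Q : QuadraticForm ℝ (EuclideanSpace ℝ (Fin n))}
    (hQ : ∀ x, Q x = ‖x‖ ^ 2) {x y : EuclideanSpace ℝ (Fin n)}
    (hxy : (inner ℝ x y : ℝ) = 0) :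
    QuadraticMap.associated (R := ℝ) (-Q) x y = 0 := by
  have h2 := congrArg (fun B => B x y) (QuadraticMap.two_nsmul_associated ℝ (-Q))
  simp only [LinearMap.smul_apply, smul_eq_mul, QuadraticMap.polarBilin_apply_apply,
    QuadraticMap.polar, QuadraticMap.neg_apply, nsmul_eq_mul, Nat.cast_ofNat] at h2
  rw [hQ, hQ, hQ, norm_add_sq_real, hxy] at h2
  have h3 : (2 : ℝ) * QuadraticMap.associated (R := ℝ) (-Q) x y = 0 := by
    rw [h2]; ring
  linarith

private lemma aux_changeForm_ofFn {n : ℕ} {Q : QuadraticForm ℝ (EuclideanSpace ℝ (Fin n))}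
    (hQ : ∀ x, Q x = ‖x‖ ^ 2) {k : ℕ} (u : Fin k → EuclideanSpace ℝ (Fin n))
    (hu : ∀ i j, i ≠ j → (inner ℝ (u i) (u j) : ℝ) = 0) :
    changeForm (changeForm.associated_neg_proof (Q := Q))
        (List.ofFn fun i => ι Q (u i)).prod
      = (List.ofFn fun i => ι (0 : QuadraticForm ℝ (EuclideanSpace ℝ (Fin n))) (u i)).prod := by
  have h1 : (List.ofFn fun i => ι Q (u i)) = (List.ofFn u).map (ι Q) := by
    rw [List.map_ofFn]; rfl
  have h2 : (List.ofFn fun i => ι (0 : QuadraticForm ℝ (EuclideanSpace ℝ (Fin n))) (u i))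
      = (List.ofFn u).map (ι 0) := by
    rw [List.map_ofFn]; rfl
  rw [h1, h2]
  refine aux_changeForm _ _ ?_
  rw [List.pairwise_ofFn]
  exact fun i j hij => aux_assoc hQ (hu i j (ne_of_lt hij))

/-- Two orthogonal bases of the same subspace give blades that agree up to a nonzero scalar. -/
private lemma aux_blade_eq {n m : ℕ} {Q : QuadraticForm ℝ (EuclideanSpace ℝ (Fin n))}
    (hQ : ∀ x, Q x = ‖x‖ ^ 2) (𝒜 : Submodule ℝ (EuclideanSpace ℝ (Fin n)))
    (v w : Fin m → EuclideanSpace ℝ (Fin n))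
    (hv_orth : ∀ i j, i ≠ j → (inner ℝ (v i) (v j) : ℝ) = 0) (hv_ne : ∀ i, v i ≠ 0)
    (hv_span : Submodule.span ℝ (Set.range v) = 𝒜)
    (hw_orth : ∀ i j, i ≠ j → (inner ℝ (w i) (w j) : ℝ) = 0) (hw_ne : ∀ i, w i ≠ 0)
    (hw_span : Submodule.span ℝ (Set.range w) = 𝒜) :
    ∃ c : ℝ, c ≠ 0 ∧ (List.ofFn fun i => ι Q (v i)).prod
      = c • (List.ofFn fun i => ι Q (w i)).prod := by
  classical
  have hvA : ∀ i, v i ∈ 𝒜 := by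
    intro i
    have h1 : v i ∈ Submodule.span ℝ (Set.range v) := Submodule.subset_span ⟨i, rfl⟩
    rwa [hv_span] at h1
  have hwA : ∀ i, w i ∈ 𝒜 := by
    intro i
    have h1 : w i ∈ Submodule.span ℝ (Set.range w) := Submodule.subset_span ⟨i, rfl⟩
    rwa [hw_span] at h1
  let v' : Fin m → 𝒜 := fun i => ⟨v i, hvA i⟩
  let w' : Fin m → 𝒜 := fun i => ⟨w i, hwA i⟩
  have hv'_li : LinearIndependent ℝ v' :=
    LinearIndependent.of_comp 𝒜.subtype (aux_orth_li v hv_orth hv_ne)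
  have hw'_li : LinearIndependent ℝ w' :=
    LinearIndependent.of_comp 𝒜.subtype (aux_orth_li w hw_orth hw_ne)
  have hv'_span : Submodule.span ℝ (Set.range v') = ⊤ := by
    apply Submodule.map_injective_of_injective 𝒜.injective_subtype
    rw [Submodule.map_span, ← Set.range_comp, show (⇑𝒜.subtype ∘ v') = v from rfl,
      Submodule.map_subtype_top]
    exact hv_span
  have hw'_span : Submodule.span ℝ (Set.range w') = ⊤ := by
    apply Submodule.map_injective_of_injective 𝒜.injective_subtype
    rw [Submodule.map_span, ← Set.range_comp, show (⇑𝒜.subtype ∘ w') = w from rfl,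
      Submodule.map_subtype_top]
    exact hw_span
  let e : Basis (Fin m) ℝ 𝒜 := Basis.mk hw'_li hw'_span.ge
  let f : Basis (Fin m) ℝ 𝒜 := Basis.mk hv'_li hv'_span.ge
  refine ⟨e.det v', ?_, ?_⟩
  · have h1 : v' = ⇑f := (Basis.coe_mk _ _).symm
    rw [h1]
    exact (e.isUnit_det f).ne_zero
  · -- compare images in the exterior algebra
    set F : (↥𝒜) [⋀^Fin m]→ₗ[ℝ] ExteriorAlgebra ℝ (EuclideanSpace ℝ (Fin n)) :=
      (ExteriorAlgebra.ιMulti ℝ m).compLinearMap 𝒜.subtype with hF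
    have hFv' : F v' = (List.ofFn fun i =>
        ι (0 : QuadraticForm ℝ (EuclideanSpace ℝ (Fin n))) (v i)).prod := by
      rw [hF, AlternatingMap.compLinearMap_apply, ExteriorAlgebra.ιMulti_apply]
      rfl
    have hFe : F ⇑e = (List.ofFn fun i =>
        ι (0 : QuadraticForm ℝ (EuclideanSpace ℝ (Fin n))) (w i)).prod := by
      have he_coe : ⇑e = w' := Basis.coe_mk _ _
      rw [he_coe, hF, AlternatingMap.compLinearMap_apply, ExteriorAlgebra.ιMulti_apply]
      rfl
    have hB0 := changeForm.associated_neg_proof (Q := Q)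
    have hinj : Function.Injective ⇑(changeForm hB0) := fun x y hxy =>
      (changeFormEquiv hB0).injective
        (by rw [changeFormEquiv_apply, changeFormEquiv_apply]; exact hxy)
    apply hinj
    rw [map_smul, aux_changeForm_ofFn hQ v hv_orth, aux_changeForm_ofFn hQ w hw_orth,
      ← hFv', ← hFe]
    exact aux_alt_det e F v'

/-- If `ℬ ≤ 𝒜` are subspaces of Euclidean space with orthogonal bases `b` and `v`, and
`B`, `A` are the corresponding blades in the Clifford algebra of `Q x = ‖x‖²`, then `B`
is a unit and `B⁻¹ * A` is, up to a nonzero scalar, a blade built from an orthogonal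
basis of `𝒜 ⊓ ℬᗮ`. -/
theorem inner_division_is_blade
    (n s t : ℕ) (Q : QuadraticForm ℝ (EuclideanSpace ℝ (Fin n)))
    (hQ : ∀ x, Q x = ‖x‖ ^ 2)
    (𝒜 ℬ : Submodule ℝ (EuclideanSpace ℝ (Fin n))) (hBA : ℬ ≤ 𝒜)
    (b : Fin s → EuclideanSpace ℝ (Fin n))
    (hb_orth : ∀ i j, i ≠ j → (inner ℝ (b i) (b j) : ℝ) = 0)
    (hb_ne : ∀ i, b i ≠ 0)
    (hb_span : Submodule.span ℝ (Set.range b) = ℬ)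
    (hs : finrank ℝ ℬ = s)
    (v : Fin t → EuclideanSpace ℝ (Fin n))
    (hv_orth : ∀ i j, i ≠ j → (inner ℝ (v i) (v j) : ℝ) = 0)
    (hv_ne : ∀ i, v i ≠ 0)
    (hv_span : Submodule.span ℝ (Set.range v) = 𝒜)
    (ht : finrank ℝ 𝒜 = t) :
    IsUnit ((List.ofFn fun i => ι Q (b i)).prod) ∧
    ∃ β : ℝ, β ≠ 0 ∧
      ∃ a : Fin (t - s) → EuclideanSpace ℝ (Fin n),
        (∀ i j, i ≠ j → (inner ℝ (a i) (a j) : ℝ) = 0) ∧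
        (∀ i, a i ≠ 0) ∧
        Submodule.span ℝ (Set.range a) = 𝒜 ⊓ ℬᗮ ∧
        Ring.inverse ((List.ofFn fun i => ι Q (b i)).prod) *
            (List.ofFn fun i => ι Q (v i)).prod =
          β • (List.ofFn fun i => ι Q (a i)).prod := by
  classical
  -- units
  have hι_unit : ∀ x : EuclideanSpace ℝ (Fin n), x ≠ 0 → IsUnit (ι Q x) := by
    intro x hx
    have hQx : Q x ≠ 0 := by
      rw [hQ]; exact pow_ne_zero _ (norm_ne_zero_iff.mpr hx)
    have hmul : ι Q x * ((Q x)⁻¹ • ι Q x) = 1 := by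
      rw [mul_smul_comm, ι_sq_scalar, Algebra.algebraMap_eq_smul_one, smul_smul,
        inv_mul_cancel₀ hQx, one_smul]
    have hmul' : ((Q x)⁻¹ • ι Q x) * ι Q x = 1 := by
      rw [smul_mul_assoc, ι_sq_scalar, Algebra.algebraMap_eq_smul_one, smul_smul,
        inv_mul_cancel₀ hQx, one_smul]
    exact ⟨⟨ι Q x, (Q x)⁻¹ • ι Q x, hmul, hmul'⟩, rfl⟩
  have hBunit : IsUnit (List.ofFn fun i => ι Q (b i)).prod := by
    refine aux_prod_unit _ ?_
    intro m hm
    rw [List.mem_ofFn] at hm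
    obtain ⟨i, rfl⟩ := hm
    exact hι_unit _ (hb_ne i)
  refine ⟨hBunit, ?_⟩
  -- dimensions
  have hst : s ≤ t := by rw [← hs, ← ht]; exact Submodule.finrank_mono hBA
  obtain ⟨r, rfl⟩ : ∃ r, t = s + r := ⟨t - s, (Nat.add_sub_cancel' hst).symm⟩
  have hts : s + r - s = r := Nat.add_sub_cancel_left s r
  have hWr : finrank ℝ (𝒜 ⊓ ℬᗮ : Submodule ℝ (EuclideanSpace ℝ (Fin n))) = r := by
    rw [inf_comm]
    exact Submodule.finrank_add_inf_finrank_orthogonal' hBA (by rw [hs, ht])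
  -- orthonormal basis of the difference subspace
  let ob := (stdOrthonormalBasis ℝ
    (𝒜 ⊓ ℬᗮ : Submodule ℝ (EuclideanSpace ℝ (Fin n)))).reindex (finCongr hWr)
  let a : Fin r → EuclideanSpace ℝ (Fin n) := fun i => (ob i : EuclideanSpace ℝ (Fin n))
  have haW : ∀ i, a i ∈ 𝒜 ⊓ ℬᗮ := fun i => (ob i).2
  have ha_orth : ∀ i j, i ≠ j → (inner ℝ (a i) (a j) : ℝ) = 0 := by
    intro i j hij
    exact ob.orthonormal.2 hij
  have ha_ne : ∀ i, a i ≠ 0 := by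
    intro i h
    have h1 := ob.orthonormal.1 i
    rw [show ob i = 0 from Subtype.ext h] at h1
    simp at h1
  have ha_span : Submodule.span ℝ (Set.range a) = 𝒜 ⊓ ℬᗮ := by
    have h1 : Set.range a = (𝒜 ⊓ ℬᗮ).subtype '' Set.range ⇑ob := by
      rw [← Set.range_comp]; rfl
    rw [h1, ← Submodule.map_span, ← ob.coe_toBasis, Basis.span_eq, Submodule.map_subtype_top]
  -- membership of b in ℬ
  have hbB : ∀ i, b i ∈ ℬ := by
    intro i
    have h1 : b i ∈ Submodule.span ℝ (Set.range b) := Submodule.subset_span ⟨i, rfl⟩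
    rwa [hb_span] at h1
  -- the combined family
  set w : Fin (s + r) → EuclideanSpace ℝ (Fin n) := Fin.append b a with hw
  have hw_orth : ∀ i j, i ≠ j → (inner ℝ (w i) (w j) : ℝ) = 0 := by
    intro i j
    refine Fin.addCases (fun i₁ => ?_) (fun i₁ => ?_) i <;>
      refine Fin.addCases (fun j₁ => ?_) (fun j₁ => ?_) j <;>
      intro hij <;> simp only [hw, Fin.append_left, Fin.append_right]
    · exact hb_orth i₁ j₁ (fun h => hij (congrArg _ h))
    · exact Submodule.inner_right_of_mem_orthogonal (hbB i₁) (haW j₁).2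
    · exact Submodule.inner_left_of_mem_orthogonal (hbB j₁) (haW i₁).2
    · exact ha_orth i₁ j₁ (fun h => hij (congrArg _ h))
  have hw_ne : ∀ i, w i ≠ 0 := by
    intro i
    refine Fin.addCases (fun i₁ => ?_) (fun i₁ => ?_) i <;>
      simp only [hw, Fin.append_left, Fin.append_right]
    · exact hb_ne i₁
    · exact ha_ne i₁
  have hrange : Set.range w = Set.range b ∪ Set.range a := by
    ext x
    constructor
    · rintro ⟨i, rfl⟩
      refine Fin.addCases (fun i₁ => ?_) (fun i₁ => ?_) i
      · rw [hw, Fin.append_left]; exact Or.inl ⟨i₁, rfl⟩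
      · rw [hw, Fin.append_right]; exact Or.inr ⟨i₁, rfl⟩
    · rintro (⟨i, rfl⟩ | ⟨i, rfl⟩)
      · exact ⟨Fin.castAdd r i, Fin.append_left b a i⟩
      · exact ⟨Fin.natAdd s i, Fin.append_right b a i⟩
  have hw_span : Submodule.span ℝ (Set.range w) = 𝒜 := by
    rw [hrange, Submodule.span_union, hb_span, ha_span, inf_comm]
    exact Submodule.sup_orthogonal_inf_of_hasOrthogonalProjection hBA
  -- compare the two blades of 𝒜
  obtain ⟨c, hc, hblade⟩ := aux_blade_eq hQ 𝒜 v w hv_orth hv_ne hv_span hw_orth hw_ne hw_span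
  have hsplit : (List.ofFn fun i => ι Q (w i)).prod
      = (List.ofFn fun i => ι Q (b i)).prod * (List.ofFn fun i => ι Q (a i)).prod := by
    rw [List.ofFn_add (f := fun i => ι Q (w i)), List.prod_append]
    simp only [hw, Fin.append_left, Fin.append_left', Fin.append_right]
  refine ⟨c, hc, fun i => a (Fin.cast hts i), ?_, ?_, ?_, ?_⟩
  · exact fun i j hij => ha_orth _ _ (fun h => hij ((finCongr hts).injective h))
  · exact fun i => ha_ne _
  · rw [show (Set.range fun i => a (Fin.cast hts i)) = Set.range a from
      (finCongr hts).surjective.range_comp a]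
    exact ha_span
  · rw [aux_ofFn_cast hts (fun i => ι Q (a i)), hblade, hsplit, mul_smul_comm, ← mul_assoc,
      Ring.inverse_mul_cancel _ hBunit, one_mul]
end

section
/- Let E := EuclideanSpace ℝ (Fin n) with its standard positive-definite quadratic form Q x = ‖x‖², and let Cl(Q) be the associated Clifford algebra with canonical embedding ι : E → Cl(Q). Let 𝒜 and ℬ be subspaces of E and set C := 𝒜 ⊓ ℬ. Let u : Fin r → E be an orthogonal basis of 𝒜 and w : Fin s → E be an orthogonal basis of ℬ, and let a : Fin r' → E be an orthogonal basis of 𝒜 ⊓ Cᗮ and b : Fin s' → E be an orthogonal basis of ℬ ⊓ Cᗮ. Then there exists a nonzero real number α such that (ι(u 0) * ⋯ * ι(u (r−1))) * (ι(w 0) * ⋯ * ι(w (s−1))) = α • ((ι(a 0) * ⋯ * ι(a (r'−1))) * (ι(b 0) * ⋯ * ι(b (s'−1)))). (The geometric product AB of blades representing 𝒜 and ℬ equals, up to a nonzero scalar, the geometric product of blades representing the orthogonal complements of the meet inside 𝒜 and inside ℬ.) -/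
open CliffordAlgebra Module

section Aux

variable {n : ℕ}

local notation "𝔼" => EuclideanSpace ℝ (Fin n)

theorem aux_isOrtho (Q : QuadraticForm ℝ 𝔼) (hQ : ∀ x, Q x = ‖x‖ ^ 2)
    {x y : 𝔼} (h : (inner ℝ x y : ℝ) = 0) : Q.IsOrtho x y := by
  rw [QuadraticMap.isOrtho_def, hQ, hQ, hQ, norm_add_sq_real, h]
  ring

theorem aux_blade_mul_ι (Q : QuadraticForm ℝ 𝔼) {k : ℕ} (v : Fin k → 𝔼) (x : 𝔼)
    (h : ∀ i, Q.IsOrtho x (v i)) :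
    (List.ofFn fun i => ι Q (v i)).prod * ι Q x
      = ((-1 : ℝ) ^ k) • (ι Q x * (List.ofFn fun i => ι Q (v i)).prod) := by
  induction k with
  | zero => simp
  | succ m ih =>
    rw [List.ofFn_succ, List.prod_cons, mul_assoc,
      ih (fun i => v i.succ) (fun i => h i.succ), mul_smul_comm,
      ι_mul_ι_mul_of_isOrtho _ (QuadraticMap.isOrtho_comm.mp (h 0)),
      pow_succ, mul_smul, smul_neg, neg_one_smul, smul_neg]

theorem aux_blade_sq (Q : QuadraticForm ℝ 𝔼) (hQ : ∀ x, Q x = ‖x‖ ^ 2) {k : ℕ}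
    (v : Fin k → 𝔼) (horth : ∀ i j, i ≠ j → (inner ℝ (v i) (v j) : ℝ) = 0)
    (hne : ∀ i, v i ≠ 0) :
    ∃ γ : ℝ, γ ≠ 0 ∧
      (List.ofFn fun i => ι Q (v i)).prod * (List.ofFn fun i => ι Q (v i)).prod = γ • 1 := by
  induction k with
  | zero => exact ⟨1, one_ne_zero, by simp⟩
  | succ m ih =>
    obtain ⟨γ', hγ', hPt⟩ := ih (fun i => v i.succ)
      (fun i j hij => horth i.succ j.succ (by simpa using hij)) (fun i => hne i.succ)
    refine ⟨(-1) ^ m * (Q (v 0) * γ'), ?_, ?_⟩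
    · have hQv : Q (v 0) ≠ 0 := by
        rw [hQ]
        exact pow_ne_zero _ (norm_ne_zero_iff.mpr (hne 0))
      exact mul_ne_zero (pow_ne_zero _ (by norm_num)) (mul_ne_zero hQv hγ')
    · have horth0 : ∀ i : Fin m, Q.IsOrtho (v 0) (v i.succ) := fun i =>
        aux_isOrtho Q hQ (horth 0 i.succ (Fin.succ_ne_zero i).symm)
      rw [List.ofFn_succ, List.prod_cons, mul_assoc, ← mul_assoc ((List.ofFn fun i => ι Q (v i.succ)).prod),
        aux_blade_mul_ι Q (fun i : Fin m => v i.succ) (v 0) horth0, smul_mul_assoc, mul_smul_comm, ← mul_assoc, ← mul_assoc,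
        ι_sq_scalar, mul_assoc, hPt, Algebra.algebraMap_eq_smul_one, smul_mul_assoc,
        one_mul, smul_smul, smul_smul, mul_assoc]

theorem aux_contract_blade (k : ℕ) (v : Fin k → 𝔼) (d : Module.Dual ℝ 𝔼)
    (hd : ∀ i, d (v i) = 0) :
    contractLeft (Q := (0 : QuadraticForm ℝ 𝔼)) d
      (List.ofFn fun i => ι (0 : QuadraticForm ℝ 𝔼) (v i)).prod = 0 := by
  induction k with
  | zero => simp
  | succ m ih =>
    rw [List.ofFn_succ, List.prod_cons, contractLeft_ι_mul, hd, zero_smul,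
      ih (fun i => v i.succ) (fun i => hd i.succ), mul_zero, sub_zero]

theorem aux_assoc_zero (Q : QuadraticForm ℝ 𝔼) (hQ : ∀ x, Q x = ‖x‖ ^ 2)
    {x y : 𝔼} (h : (inner ℝ x y : ℝ) = 0) :
    (QuadraticMap.associated (R := ℝ) (-Q)) x y = 0 := by
  rw [QuadraticMap.associated_apply]
  have : (-Q) (x + y) - (-Q) x - (-Q) y = 0 := by
    simp only [QuadraticMap.neg_apply, hQ, norm_add_sq_real, h]
    ring
  rw [this, smul_zero]

theorem aux_changeForm_blade (Q : QuadraticForm ℝ 𝔼) (hQ : ∀ x, Q x = ‖x‖ ^ 2)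
    {k : ℕ} (v : Fin k → 𝔼)
    (horth : ∀ i j, i ≠ j → (inner ℝ (v i) (v j) : ℝ) = 0) :
    changeForm (changeForm.associated_neg_proof (Q := Q))
        (List.ofFn fun i => ι Q (v i)).prod
      = (List.ofFn fun i => ι (0 : QuadraticForm ℝ 𝔼) (v i)).prod := by
  induction k with
  | zero => simp
  | succ m ih =>
    rw [List.ofFn_succ, List.prod_cons, changeForm_ι_mul,
      ih (fun i => v i.succ) (fun i j hij => horth i.succ j.succ (by simpa using hij)),
      List.ofFn_succ, List.prod_cons]
    have hc := aux_contract_blade m (fun i => v i.succ)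
      ((QuadraticMap.associated (R := ℝ) (-Q)) (v 0))
      (fun i => aux_assoc_zero Q hQ (horth 0 i.succ (Fin.succ_ne_zero i).symm))
    rw [hc, sub_zero]

theorem aux_ext_blade_unique {k : ℕ} (S : Submodule ℝ 𝔼)
    (hfin : finrank ℝ S = k) (v v' : Fin k → 𝔼)
    (hv : LinearIndependent ℝ v) (hv' : LinearIndependent ℝ v')
    (hsv : Submodule.span ℝ (Set.range v) = S)
    (hsv' : Submodule.span ℝ (Set.range v') = S) :
    ∃ α : ℝ, α ≠ 0 ∧
      (List.ofFn fun i => ι (0 : QuadraticForm ℝ 𝔼) (v' i)).prod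
        = α • (List.ofFn fun i => ι (0 : QuadraticForm ℝ 𝔼) (v i)).prod := by
  rcases Nat.eq_zero_or_pos k with hk | hk
  · subst hk
    exact ⟨1, one_ne_zero, by simp⟩
  haveI : Nonempty (Fin k) := Fin.pos_iff_nonempty.mp hk
  have hmemv : ∀ i, v i ∈ S := fun i => hsv ▸ Submodule.subset_span (Set.mem_range_self i)
  have hmemv' : ∀ i, v' i ∈ S := fun i => hsv' ▸ Submodule.subset_span (Set.mem_range_self i)
  set vS : Fin k → S := fun i => ⟨v i, hmemv i⟩ with hvS
  set vS' : Fin k → S := fun i => ⟨v' i, hmemv' i⟩ with hvS'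
  have hcomp : (⇑S.subtype ∘ vS) = v := rfl
  have hcomp' : (⇑S.subtype ∘ vS') = v' := rfl
  have hindS : LinearIndependent ℝ vS := LinearIndependent.of_comp S.subtype (hcomp ▸ hv)
  have hindS' : LinearIndependent ℝ vS' := LinearIndependent.of_comp S.subtype (hcomp' ▸ hv')
  have hcard : Fintype.card (Fin k) = finrank ℝ S := by simp [hfin]
  set e : Basis (Fin k) ℝ S := basisOfLinearIndependentOfCardEqFinrank hindS hcard with he_def
  set e' : Basis (Fin k) ℝ S := basisOfLinearIndependentOfCardEqFinrank hindS' hcard with he'_def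
  have he : ⇑e = vS := coe_basisOfLinearIndependentOfCardEqFinrank hindS hcard
  have he' : ⇑e' = vS' := coe_basisOfLinearIndependentOfCardEqFinrank hindS' hcard
  set g : S [⋀^Fin k]→ₗ[ℝ] ExteriorAlgebra ℝ 𝔼 :=
    (ExteriorAlgebra.ιMulti ℝ k).compLinearMap S.subtype with hg_def
  set G : S [⋀^Fin k]→ₗ[ℝ] ExteriorAlgebra ℝ 𝔼 :=
    (LinearMap.toSpanSingleton ℝ _ (g ⇑e)).compAlternatingMap e.det with hG_def
  have hGapp : ∀ x : Fin k → S, G x = e.det x • g ⇑e := fun x => by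
    simp [hG_def, LinearMap.toSpanSingleton_apply]
  have hgG : g = G := by
    refine Basis.ext_alternating e fun σ hσ => ?_
    have hbij := Finite.injective_iff_bijective.mp hσ
    have h1 : (fun i => e (σ i)) = ⇑e ∘ (Equiv.ofBijective σ hbij) := rfl
    rw [h1, g.map_perm, hGapp, (e.det).map_perm, Basis.det_self]
    rcases Int.units_eq_one_or (Equiv.Perm.sign (Equiv.ofBijective σ hbij)) with h | h <;>
      simp [h, hGapp]
  have key : g vS' = e.det vS' • g ⇑e := by
    conv_lhs => rw [hgG]
    exact hGapp vS'
  have hα : e.det vS' ≠ 0 := by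
    have h0 : IsUnit (e.det ⇑e') := e.isUnit_det e'
    rw [he'] at h0
    exact h0.ne_zero
  refine ⟨e.det vS', hα, ?_⟩
  have hprod : ∀ (x : Fin k → 𝔼) (hx : ∀ i, x i ∈ S),
      g (fun i => (⟨x i, hx i⟩ : S)) = (List.ofFn fun i => ι (0 : QuadraticForm ℝ 𝔼) (x i)).prod := by
    intro x hx
    rw [hg_def, AlternatingMap.compLinearMap_apply]
    exact ExteriorAlgebra.ιMulti_apply x
  rw [← hprod v' hmemv', ← hprod v hmemv]
  rw [key, he]

theorem aux_blade_unique (Q : QuadraticForm ℝ 𝔼) (hQ : ∀ x, Q x = ‖x‖ ^ 2) {k : ℕ}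
    (S : Submodule ℝ 𝔼) (hfin : finrank ℝ S = k) (v v' : Fin k → 𝔼)
    (hvo : ∀ i j, i ≠ j → (inner ℝ (v i) (v j) : ℝ) = 0) (hvne : ∀ i, v i ≠ 0)
    (hsv : Submodule.span ℝ (Set.range v) = S)
    (hv'o : ∀ i j, i ≠ j → (inner ℝ (v' i) (v' j) : ℝ) = 0) (hv'ne : ∀ i, v' i ≠ 0)
    (hsv' : Submodule.span ℝ (Set.range v') = S) :
    ∃ α : ℝ, α ≠ 0 ∧
      (List.ofFn fun i => ι Q (v' i)).prod = α • (List.ofFn fun i => ι Q (v i)).prod := by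
  have hv : LinearIndependent ℝ v :=
    linearIndependent_of_ne_zero_of_inner_eq_zero hvne (fun i j hij => hvo i j hij)
  have hv' : LinearIndependent ℝ v' :=
    linearIndependent_of_ne_zero_of_inner_eq_zero hv'ne (fun i j hij => hv'o i j hij)
  obtain ⟨α, hα, h⟩ := aux_ext_blade_unique S hfin v v' hv hv' hsv hsv'
  refine ⟨α, hα, ?_⟩
  have hinj : Function.Injective
      (changeForm (changeForm.associated_neg_proof (Q := Q))) := by
    have : ⇑(changeFormEquiv (changeForm.associated_neg_proof (Q := Q)))
        = ⇑(changeForm (changeForm.associated_neg_proof (Q := Q))) := rfl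
    rw [← this]
    exact (changeFormEquiv _).injective
  apply hinj
  rw [map_smul, aux_changeForm_blade Q hQ v hvo, aux_changeForm_blade Q hQ v' hv'o]
  exact h

theorem aux_append_orth {m₁ m₂ : ℕ} (x : Fin m₁ → 𝔼) (y : Fin m₂ → 𝔼)
    (hx : ∀ i j, i ≠ j → (inner ℝ (x i) (x j) : ℝ) = 0)
    (hy : ∀ i j, i ≠ j → (inner ℝ (y i) (y j) : ℝ) = 0)
    (hxy : ∀ i j, (inner ℝ (x i) (y j) : ℝ) = 0) :
    ∀ i j, i ≠ j → (inner ℝ (Fin.append x y i) (Fin.append x y j) : ℝ) = 0 := by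
  intro i j hij
  induction i using Fin.addCases with
  | left i1 =>
    induction j using Fin.addCases with
    | left j1 =>
      rw [Fin.append_left, Fin.append_left]
      exact hx _ _ (fun h => hij (by rw [h]))
    | right j1 =>
      rw [Fin.append_left, Fin.append_right]
      exact hxy _ _
  | right i1 =>
    induction j using Fin.addCases with
    | left j1 =>
      rw [Fin.append_right, Fin.append_left, real_inner_comm]
      exact hxy _ _
    | right j1 =>
      rw [Fin.append_right, Fin.append_right]
      exact hy _ _ (fun h => hij (by rw [h]))

theorem aux_range_append {m₁ m₂ : ℕ} (x : Fin m₁ → 𝔼) (y : Fin m₂ → 𝔼) :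
    Set.range (Fin.append x y) = Set.range x ∪ Set.range y := by
  have hcomp : Fin.append x y ∘ ⇑finSumFinEquiv = Sum.elim x y := by
    funext p
    cases p with
    | inl i => simp [Fin.append_left]
    | inr i => simp [Fin.append_right]
  rw [← Set.Sum.elim_range, ← hcomp]
  exact (finSumFinEquiv.surjective.range_comp _).symm

theorem aux_split_prod (Q : QuadraticForm ℝ 𝔼) {m₁ m₂ : ℕ} (x : Fin m₁ → 𝔼) (y : Fin m₂ → 𝔼) :
    (List.ofFn fun i => ι Q (Fin.append x y i)).prod
      = (List.ofFn fun i => ι Q (x i)).prod * (List.ofFn fun i => ι Q (y i)).prod := by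
  rw [List.ofFn_add, List.prod_append]
  simp [Fin.append_left, Fin.append_right]


/-- The geometric product `AB` of blades representing subspaces `𝒜` and `ℬ` of Euclidean
space equals, up to a nonzero scalar, the geometric product of blades representing the
orthogonal complements of the meet `C = 𝒜 ⊓ ℬ` inside `𝒜` and inside `ℬ`. -/
theorem geometric_product_factorization
    (n r s r' s' : ℕ) (Q : QuadraticForm ℝ (EuclideanSpace ℝ (Fin n)))
    (hQ : ∀ x, Q x = ‖x‖ ^ 2)
    (𝒜 ℬ : Submodule ℝ (EuclideanSpace ℝ (Fin n)))
    (u : Fin r → EuclideanSpace ℝ (Fin n))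
    (hu_orth : ∀ i j, i ≠ j → (inner ℝ (u i) (u j) : ℝ) = 0)
    (hu_ne : ∀ i, u i ≠ 0)
    (hu_span : Submodule.span ℝ (Set.range u) = 𝒜)
    (hr : finrank ℝ 𝒜 = r)
    (w : Fin s → EuclideanSpace ℝ (Fin n))
    (hw_orth : ∀ i j, i ≠ j → (inner ℝ (w i) (w j) : ℝ) = 0)
    (hw_ne : ∀ i, w i ≠ 0)
    (hw_span : Submodule.span ℝ (Set.range w) = ℬ)
    (hs : finrank ℝ ℬ = s)
    (a : Fin r' → EuclideanSpace ℝ (Fin n))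
    (ha_orth : ∀ i j, i ≠ j → (inner ℝ (a i) (a j) : ℝ) = 0)
    (ha_ne : ∀ i, a i ≠ 0)
    (ha_span : Submodule.span ℝ (Set.range a) = 𝒜 ⊓ (𝒜 ⊓ ℬ)ᗮ)
    (hr' : finrank ℝ (𝒜 ⊓ (𝒜 ⊓ ℬ)ᗮ : Submodule ℝ (EuclideanSpace ℝ (Fin n))) = r')
    (b : Fin s' → EuclideanSpace ℝ (Fin n))
    (hb_orth : ∀ i j, i ≠ j → (inner ℝ (b i) (b j) : ℝ) = 0)
    (hb_ne : ∀ i, b i ≠ 0)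
    (hb_span : Submodule.span ℝ (Set.range b) = ℬ ⊓ (𝒜 ⊓ ℬ)ᗮ)
    (hs' : finrank ℝ (ℬ ⊓ (𝒜 ⊓ ℬ)ᗮ : Submodule ℝ (EuclideanSpace ℝ (Fin n))) = s') :
    ∃ α : ℝ, α ≠ 0 ∧
      (List.ofFn fun i => ι Q (u i)).prod * (List.ofFn fun i => ι Q (w i)).prod =
        α • ((List.ofFn fun i => ι Q (a i)).prod * (List.ofFn fun i => ι Q (b i)).prod) := by
  classical
  set C : Submodule ℝ (EuclideanSpace ℝ (Fin n)) := 𝒜 ⊓ ℬ with hC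
  set t : ℕ := finrank ℝ C with ht
  have hCA : C ≤ 𝒜 := inf_le_left
  have hCB : C ≤ ℬ := inf_le_right
  have hdimA : t + r' = r := by
    have h := Submodule.finrank_add_inf_finrank_orthogonal (K₁ := C) (K₂ := 𝒜) hCA
    rw [inf_comm, hr', hr] at h
    exact h
  have hdimB : t + s' = s := by
    have h := Submodule.finrank_add_inf_finrank_orthogonal (K₁ := C) (K₂ := ℬ) hCB
    rw [inf_comm, hs', hs] at h
    exact h
  have hr2 : r = r' + t := by omega
  have hs2 : s = t + s' := by omega
  subst hr2 hs2
  -- an orthonormal basis of `C`, seen in the ambient space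
  obtain ⟨c, hc_orth, hc_ne, hc_span⟩ : ∃ c : Fin t → EuclideanSpace ℝ (Fin n),
      (∀ i j, i ≠ j → (inner ℝ (c i) (c j) : ℝ) = 0) ∧ (∀ i, c i ≠ 0) ∧
        Submodule.span ℝ (Set.range c) = C := by
    refine ⟨fun i => ((stdOrthonormalBasis ℝ C) i : EuclideanSpace ℝ (Fin n)), ?_, ?_, ?_⟩
    · intro i j hij
      simpa [← Submodule.coe_inner] using (stdOrthonormalBasis ℝ C).orthonormal.2 hij
    · intro i
      simpa [Submodule.coe_eq_zero] using (stdOrthonormalBasis ℝ C).orthonormal.ne_zero i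
    · have h1 : Set.range (fun i => ((stdOrthonormalBasis ℝ C) i : EuclideanSpace ℝ (Fin n)))
          = ⇑C.subtype '' Set.range ⇑(stdOrthonormalBasis ℝ C) := by
        rw [← Set.range_comp]; rfl
      have h2 : Submodule.span ℝ (Set.range ⇑(stdOrthonormalBasis ℝ C)) = ⊤ := by
        rw [← OrthonormalBasis.coe_toBasis]; exact Basis.span_eq _
      rw [h1, Submodule.span_image, h2, Submodule.map_top, Submodule.range_subtype]
  -- membership facts
  have ha_mem : ∀ i, a i ∈ 𝒜 ⊓ Cᗮ := fun i =>
    ha_span ▸ Submodule.subset_span (Set.mem_range_self i)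
  have hb_mem : ∀ i, b i ∈ ℬ ⊓ Cᗮ := fun i =>
    hb_span ▸ Submodule.subset_span (Set.mem_range_self i)
  have hc_mem : ∀ i, c i ∈ C := fun i =>
    hc_span ▸ Submodule.subset_span (Set.mem_range_self i)
  have hac : ∀ i j, (inner ℝ (a i) (c j) : ℝ) = 0 := fun i j => by
    rw [real_inner_comm]
    exact ((Submodule.mem_orthogonal C (a i)).mp (ha_mem i).2) _ (hc_mem j)
  have hcb : ∀ i j, (inner ℝ (c i) (b j) : ℝ) = 0 := fun i j =>
    ((Submodule.mem_orthogonal C (b j)).mp (hb_mem j).2) _ (hc_mem i)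
  -- the appended families
  have hsupA : Submodule.span ℝ (Set.range (Fin.append a c)) = 𝒜 := by
    rw [aux_range_append, Submodule.span_union, ha_span, hc_span]
    have h := Submodule.sup_orthogonal_inf_of_hasOrthogonalProjection hCA
    rw [inf_comm] at h
    rw [sup_comm]
    exact h
  have hsupB : Submodule.span ℝ (Set.range (Fin.append c b)) = ℬ := by
    rw [aux_range_append, Submodule.span_union, hb_span, hc_span]
    have h := Submodule.sup_orthogonal_inf_of_hasOrthogonalProjection hCB
    rw [inf_comm] at h
    exact h
  have hA_ne : ∀ i, Fin.append a c i ≠ 0 := by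
    intro i
    induction i using Fin.addCases with
    | left i1 => rw [Fin.append_left]; exact ha_ne i1
    | right i1 => rw [Fin.append_right]; exact hc_ne i1
  have hB_ne : ∀ i, Fin.append c b i ≠ 0 := by
    intro i
    induction i using Fin.addCases with
    | left i1 => rw [Fin.append_left]; exact hc_ne i1
    | right i1 => rw [Fin.append_right]; exact hb_ne i1
  obtain ⟨lam, hlam, hU⟩ := aux_blade_unique Q hQ 𝒜 hr (Fin.append a c) u
    (aux_append_orth a c ha_orth hc_orth hac) hA_ne hsupA hu_orth hu_ne hu_span
  obtain ⟨mu, hmu, hW⟩ := aux_blade_unique Q hQ ℬ hs (Fin.append c b) w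
    (aux_append_orth c b hc_orth hb_orth hcb) hB_ne hsupB hw_orth hw_ne hw_span
  obtain ⟨γ, hγ, hsq⟩ := aux_blade_sq Q hQ c hc_orth hc_ne
  refine ⟨lam * mu * γ, mul_ne_zero (mul_ne_zero hlam hmu) hγ, ?_⟩
  rw [hU, hW, aux_split_prod, aux_split_prod]
  rw [smul_mul_smul_comm]
  have hmid : ((List.ofFn fun i => ι Q (a i)).prod * (List.ofFn fun i => ι Q (c i)).prod) *
      ((List.ofFn fun i => ι Q (c i)).prod * (List.ofFn fun i => ι Q (b i)).prod)
      = γ • ((List.ofFn fun i => ι Q (a i)).prod * (List.ofFn fun i => ι Q (b i)).prod) := by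
    rw [mul_assoc, ← mul_assoc ((List.ofFn fun i => ι Q (c i)).prod), hsq, smul_mul_assoc,
      one_mul, mul_smul_comm]
  rw [hmid, smul_smul]
end Aux
end

section
/- Let Q be a quadratic form on a real vector space V, with Clifford algebra Cl(Q) and canonical embedding ι : V → Cl(Q). Let r : ℕ, let c : Fin r → V be a family of vectors whose images pairwise anticommute (ι(c i) * ι(c j) = −(ι(c j) * ι(c i)) for all i ≠ j), and set A := ι(c 0) * ι(c 1) * ⋯ * ι(c (r−1)) (the ordered product, with A = 1 when r = 0). Let a ∈ V and define the outer product a ∧ A := ½(ι a * A + (−1)^r • (A * ι a)). Then a ∧ A is a blade: either a ∧ A = 0, or there exists a family d : Fin (r+1) → V with pairwise anticommuting images (ι(d i) * ι(d j) = −(ι(d j) * ι(d i)) for i ≠ j) such that a ∧ A = ι(d 0) * ι(d 1) * ⋯ * ι(d r). (The outer product of a vector and an r-blade is an (r+1)-blade, in any signature, including degenerate ones.) -/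
open CliffordAlgebra

section helpers

variable {V : Type*} [AddCommGroup V] [Module ℝ V] {Q : QuadraticForm ℝ V}

local notation "C" => CliffordAlgebra Q

private lemma neg_one_sq_pow (s : ℕ) : ((-1:ℝ))^s * (-1:ℝ)^s = 1 := by
  rw [← pow_add]
  exact Even.neg_one_pow ⟨s, rfl⟩

/-- move an element anticommuting with all members through a product -/
private lemma comm_prod (x : C) :
    ∀ (L : List C), (∀ y ∈ L, x * y = -(y * x)) →
      x * L.prod = (-1:ℝ)^L.length • (L.prod * x)
  | [], _ => by simp
  | y :: L, h => by
    have hy : x * y = -(y * x) := h y (List.mem_cons_self)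
    have ih := comm_prod x L (fun z hz => h z (List.mem_cons_of_mem _ hz))
    simp only [List.prod_cons, List.length_cons, ← mul_assoc, hy]
    rw [neg_mul, mul_assoc, ih, pow_succ, mul_comm ((-1:ℝ)^L.length) (-1:ℝ)]
    rw [mul_smul, neg_one_smul, mul_smul_comm, mul_assoc]

private lemma comm_prod' (x : C) (L : List C) (h : ∀ y ∈ L, x * y = -(y * x)) :
    L.prod * x = (-1:ℝ)^L.length • (x * L.prod) := by
  rw [comm_prod x L h, smul_smul, neg_one_sq_pow, one_smul]

/-- `x * M.prod * x = 0` when `x` squares to zero and anticommutes with members of `M`. -/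
private lemma x_prod_x (x : C) (hx : x * x = 0) (M : List C)
    (h : ∀ y ∈ M, x * y = -(y * x)) : x * M.prod * x = 0 := by
  rw [comm_prod x M h, smul_mul_assoc, mul_assoc, hx, mul_zero, smul_zero]

private def AddMul (x : C) : C → C → Prop := fun u v => ∃ t : ℝ, v = u + t • x

private lemma addmul_anticomm (x : C) (hx : x * x = 0) {u v : C}
    (huv : AddMul x u v) (hu : x * u = -(u * x)) : x * v = -(v * x) := by
  obtain ⟨t, rfl⟩ := huv
  rw [mul_add, add_mul, mul_smul_comm, smul_mul_assoc, hx, smul_zero, add_zero, hu, neg_add]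
  simp

private lemma mod_anticomm (x : C) (hx : x * x = 0) {P P' : List C}
    (hPP : List.Forall₂ (AddMul x) P P') (h : ∀ y ∈ P, x * y = -(y * x)) :
    ∀ y ∈ P', x * y = -(y * x) := by
  induction hPP with
  | nil => simp
  | cons huv hPP ih =>
    rename_i u v P P'
    intro y hy
    rcases List.mem_cons.mp hy with rfl | hy
    · exact addmul_anticomm x hx huv (h u (List.mem_cons_self))
    · exact ih (fun z hz => h z (List.mem_cons_of_mem _ hz)) y hy

/-- modifying list elements by multiples of null `x`, with `x` to the left -/
private lemma mod_right (x : C) (hx : x * x = 0) {S S' : List C}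
    (hSS : List.Forall₂ (AddMul x) S S') (h : ∀ y ∈ S, x * y = -(y * x)) :
    x * S'.prod = x * S.prod := by
  induction hSS with
  | nil => rfl
  | cons huv hSS ih =>
    rename_i u v S S'
    obtain ⟨t, rfl⟩ := huv
    have hu : x * u = -(u * x) := h u (List.mem_cons_self)
    have ih' := ih (fun z hz => h z (List.mem_cons_of_mem _ hz))
    simp only [List.prod_cons]
    rw [add_mul, mul_add, smul_mul_assoc, mul_smul_comm, ← mul_assoc x x, hx, zero_mul,
      smul_zero, add_zero, ← mul_assoc, hu, neg_mul, mul_assoc, ih', ← mul_assoc, ← neg_mul,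
      ← hu, mul_assoc]

/-- modifying list elements by multiples of null `x`, with `x` to the right -/
private lemma mod_left (x : C) (hx : x * x = 0) {P P' : List C}
    (hPP : List.Forall₂ (AddMul x) P P') (h : ∀ y ∈ P, x * y = -(y * x)) :
    ∀ z : C, P'.prod * (x * z) = P.prod * (x * z) := by
  induction hPP with
  | nil => intro z; rfl
  | cons huv hPP ih =>
    rename_i u v P P'
    intro z
    obtain ⟨t, rfl⟩ := huv
    have htail : ∀ y ∈ P, x * y = -(y * x) := fun z hz => h z (List.mem_cons_of_mem _ hz)
    have hP' : ∀ y ∈ P', x * y = -(y * x) := mod_anticomm x hx hPP htail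
    have hzero : x * P'.prod * x = 0 := x_prod_x x hx P' hP'
    simp only [List.prod_cons, add_mul, smul_mul_assoc]
    rw [← mul_assoc (x * P'.prod) x z, hzero, zero_mul, smul_zero, add_zero,
      mul_assoc u P'.prod (x * z), ih htail z, ← mul_assoc]

end helpers

section vectorlayer

variable {V : Type*} [AddCommGroup V] [Module ℝ V] {Q : QuadraticForm ℝ V}

local notation "C" => CliffordAlgebra Q

private lemma sign_helper (p s : ℕ) : ((-1:ℝ))^(p+(s+1)) * (-1:ℝ)^s = -(-1:ℝ)^p := by
  have h1 : (p+(s+1)) + s = (p+1) + 2*s := by ring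
  calc ((-1:ℝ))^(p+(s+1)) * (-1:ℝ)^s = (-1:ℝ)^((p+(s+1))+s) := (pow_add _ _ _).symm
  _ = (-1:ℝ)^(p+1) * ((-1:ℝ)^2)^s := by rw [h1, pow_add, pow_mul]
  _ = -(-1:ℝ)^p := by norm_num [pow_succ]

private lemma ac_of_polar {u v : V} (h : QuadraticMap.polar (⇑Q) u v = 0) :
    ι Q u * ι Q v = -(ι Q v * ι Q u) := by
  have := ι_mul_ι_add_swap (Q := Q) u v
  rw [h, map_zero] at this
  exact eq_neg_of_add_eq_zero_left this

private lemma polar_of_ac {u v : V} (h : ι Q u * ι Q v = -(ι Q v * ι Q u)) :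
    QuadraticMap.polar (⇑Q) u v = 0 := by
  have hinj : Function.Injective (algebraMap ℝ (CliffordAlgebra Q)) := RingHom.injective _
  apply hinj
  rw [map_zero, ← ι_mul_ι_add_swap (Q := Q) u v, h, neg_add_cancel]

/-- the outer product of `a` with the blade given by the list `l` -/
private noncomputable def wedgeF (Q : QuadraticForm ℝ V) (l : List V) (a : V) : CliffordAlgebra Q :=
  (2⁻¹ : ℝ) • (ι Q a * (l.map (ι Q)).prod +
    ((-1 : ℝ) ^ l.length) • ((l.map (ι Q)).prod * ι Q a))

private lemma wedgeF_sub (l : List V) (x y : V) :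
    wedgeF Q l (x - y) = wedgeF Q l x - wedgeF Q l y := by
  simp only [wedgeF, map_sub, sub_mul, mul_sub, smul_sub]
  module

private lemma wedgeF_smul (l : List V) (s : ℝ) (x : V) :
    wedgeF Q l (s • x) = s • wedgeF Q l x := by
  simp only [wedgeF, map_smul, smul_mul_assoc, mul_smul_comm]
  module

private lemma wedgeF_zero (l : List V) : wedgeF Q l 0 = 0 := by
  simp [wedgeF]

private lemma wedgeF_add (l : List V) (x y : V) :
    wedgeF Q l (x + y) = wedgeF Q l x + wedgeF Q l y := by
  simp only [wedgeF, map_add, add_mul, mul_add, smul_add]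
  module

private lemma wedgeF_listsum (l : List V) (L : List V) (h : ∀ v ∈ L, wedgeF Q l v = 0) :
    wedgeF Q l L.sum = 0 := by
  induction L with
  | nil => simpa using wedgeF_zero l
  | cons v L ih =>
    rw [List.sum_cons, wedgeF_add, h v (List.mem_cons_self),
      ih (fun w hw => h w (List.mem_cons_of_mem _ hw)), add_zero]

/-- the outer product with a member of the blade's list vanishes -/
private lemma wedgeF_mem (l : List V)
    (hl : l.Pairwise (fun u v => QuadraticMap.polar (⇑Q) u v = 0))
    (u : V) (hu : u ∈ l) : wedgeF Q l u = 0 := by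
  obtain ⟨P, S, rfl⟩ := List.append_of_mem hu
  rw [List.pairwise_append] at hl
  obtain ⟨hP, hUS, hcross⟩ := hl
  rw [List.pairwise_cons] at hUS
  obtain ⟨hUs, hS⟩ := hUS
  have hacP : ∀ y ∈ P.map (ι Q), ι Q u * y = -(y * ι Q u) := by
    intro y hy
    obtain ⟨z, hz, rfl⟩ := List.mem_map.mp hy
    exact ac_of_polar (by rw [QuadraticMap.polar_comm]; exact hcross z hz u (List.mem_cons_self))
  have hacS : ∀ y ∈ S.map (ι Q), ι Q u * y = -(y * ι Q u) := by
    intro y hy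
    obtain ⟨z, hz, rfl⟩ := List.mem_map.mp hy
    exact ac_of_polar (hUs z hz)
  have hsplit : ((P ++ u :: S).map (ι Q)).prod
      = (P.map (ι Q)).prod * (ι Q u * (S.map (ι Q)).prod) := by
    simp [List.prod_append, mul_assoc]
  rw [wedgeF, hsplit]
  have e1 : ι Q u * ((P.map (ι Q)).prod * (ι Q u * (S.map (ι Q)).prod))
      = ((-1:ℝ)^P.length) • ((P.map (ι Q)).prod * ((ι Q u * ι Q u) * (S.map (ι Q)).prod)) := by
    rw [← mul_assoc, comm_prod _ _ hacP, smul_mul_assoc, mul_assoc, ← mul_assoc (ι Q u),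
      List.length_map]
  have e2 : ((P.map (ι Q)).prod * (ι Q u * (S.map (ι Q)).prod)) * ι Q u
      = ((-1:ℝ)^S.length) • ((P.map (ι Q)).prod * ((ι Q u * ι Q u) * (S.map (ι Q)).prod)) := by
    rw [mul_assoc, mul_assoc, comm_prod' _ _ hacS, mul_smul_comm, mul_smul_comm,
      List.length_map, ← mul_assoc (ι Q u)]
  rw [e1, e2, smul_smul, List.length_append, List.length_cons, sign_helper P.length S.length]
  module

/-- when `a` is orthogonal to everything in `l`, the wedge is just the product -/
private lemma wedgeF_ortho (l : List V) (a : V)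
    (h : ∀ u ∈ l, QuadraticMap.polar (⇑Q) a u = 0) :
    wedgeF Q l a = ι Q a * (l.map (ι Q)).prod := by
  have hac : ∀ y ∈ l.map (ι Q), ι Q a * y = -(y * ι Q a) := by
    intro y hy
    obtain ⟨z, hz, rfl⟩ := List.mem_map.mp hy
    exact ac_of_polar (h z hz)
  rw [wedgeF, comm_prod' _ _ hac, List.length_map, smul_smul, neg_one_sq_pow, one_smul,
    ← two_smul ℝ, smul_smul]
  norm_num

end vectorlayer

section finalcalc

variable {V : Type*} [AddCommGroup V] [Module ℝ V] {Q : QuadraticForm ℝ V}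

local notation "C" => CliffordAlgebra Q

/-- the core computation for the non-orthogonal case -/
private lemma final_calc (x y : C) (PL SL : List C) (hx : x * x = 0) (hy : y * y = 0)
    (hxP : ∀ z ∈ PL, x * z = -(z * x)) (hyP : ∀ z ∈ PL, y * z = -(z * y))
    (hyS : ∀ z ∈ SL, y * z = -(z * y)) :
    (2⁻¹ : ℝ) • (y * (PL.prod * (x * SL.prod)) +
      ((-1 : ℝ) ^ (PL.length + (SL.length + 1))) • (PL.prod * (x * SL.prod) * y)) =
    ((2⁻¹ : ℝ) • y + x) * (PL.prod * ((x - (2⁻¹ : ℝ) • y) * SL.prod)) := by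
  have hd0P : ∀ z ∈ PL, ((2⁻¹:ℝ) • y + x) * z = -(z * ((2⁻¹:ℝ) • y + x)) := by
    intro z hz
    rw [add_mul, mul_add, smul_mul_assoc, mul_smul_comm, hyP z hz, hxP z hz]
    module
  have h5 : ((2⁻¹:ℝ) • y + x) * (x - (2⁻¹:ℝ) • y) = (2⁻¹:ℝ) • (y * x - x * y) := by
    rw [add_mul, mul_sub, mul_sub, smul_mul_assoc, smul_mul_assoc, mul_smul_comm,
      mul_smul_comm, hx, hy]
    module
  have e1 : y * (PL.prod * (x * SL.prod))
      = ((-1:ℝ) ^ PL.length) • (PL.prod * ((y * x) * SL.prod)) := by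
    rw [← mul_assoc, comm_prod y PL hyP, smul_mul_assoc, mul_assoc, ← mul_assoc y x]
  have e2 : (PL.prod * (x * SL.prod)) * y
      = ((-1:ℝ) ^ SL.length) • (PL.prod * ((x * y) * SL.prod)) := by
    rw [mul_assoc PL.prod (x * SL.prod) y, mul_assoc x SL.prod y, comm_prod' y SL hyS,
      mul_smul_comm, mul_smul_comm, ← mul_assoc x y]
  have e3 : ((2⁻¹:ℝ) • y + x) * (PL.prod * ((x - (2⁻¹:ℝ) • y) * SL.prod))
      = ((-1:ℝ) ^ PL.length) • (PL.prod * (((2⁻¹:ℝ) • (y * x - x * y)) * SL.prod)) := by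
    rw [← mul_assoc, comm_prod _ PL hd0P, smul_mul_assoc, mul_assoc,
      ← mul_assoc ((2⁻¹:ℝ) • y + x) (x - (2⁻¹:ℝ) • y) SL.prod, h5]
  rw [e1, e2, e3, smul_smul, sign_helper PL.length SL.length]
  simp only [smul_sub, sub_mul, mul_sub, smul_mul_assoc, mul_smul_comm]
  module

end finalcalc

section bladelist

variable {V : Type*} [AddCommGroup V] [Module ℝ V] {Q : QuadraticForm ℝ V}

private theorem blade_list (l : List V)
    (hl : l.Pairwise fun u v => QuadraticMap.polar (⇑Q) u v = 0) (a : V) :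
    ∃ m : List V, m.length = l.length + 1 ∧
      (m.Pairwise fun u v => QuadraticMap.polar (⇑Q) u v = 0) ∧
      wedgeF Q l a = (m.map (ι Q)).prod := by
  classical
  set g : V → V := fun u =>
    (if Q u = 0 then 0 else QuadraticMap.polar (⇑Q) a u / (2 * Q u)) • u with hg
  set a1 : V := a - (l.map g).sum with ha1
  have hwe1 : wedgeF Q l a1 = wedgeF Q l a := by
    rw [ha1, wedgeF_sub, wedgeF_listsum, sub_zero]
    intro v hv
    obtain ⟨u, hu, rfl⟩ := List.mem_map.mp hv
    rw [hg, wedgeF_smul, wedgeF_mem l hl u hu, smul_zero]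
  have hC1 : ∀ u ∈ l, Q u ≠ 0 → QuadraticMap.polar (⇑Q) a1 u = 0 := by
    intro u hu hQu
    obtain ⟨P, S, hsplit⟩ := List.append_of_mem hu
    have hl' := hl
    rw [hsplit, List.pairwise_append] at hl'
    obtain ⟨-, hUS, hcross⟩ := hl'
    rw [List.pairwise_cons] at hUS
    obtain ⟨hUs, -⟩ := hUS
    have hsum : QuadraticMap.polar (⇑Q) (l.map g).sum u = QuadraticMap.polar (⇑Q) a u := by
      have hlin := map_list_sum ((QuadraticMap.polarBilin Q).flip u) (l.map g)
      have hfun : ⇑((QuadraticMap.polarBilin Q).flip u) = fun v => QuadraticMap.polar (⇑Q) v u := by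
        ext v
        simp
      simp only [hfun] at hlin
      rw [hlin, List.map_map, hsplit, List.map_append, List.map_cons, List.sum_append,
        List.sum_cons]
      have hPzero : ∀ z ∈ P.map ((fun v => QuadraticMap.polar (⇑Q) v u) ∘ g), z = 0 := by
        intro z hz
        obtain ⟨w, hw, rfl⟩ := List.mem_map.mp hz
        have hwu : QuadraticMap.polar (⇑Q) w u = 0 :=
          hcross w hw u (List.mem_cons_self)
        simp only [Function.comp, hg]
        split_ifs with hcase
        · simp
        · simp [QuadraticMap.polar_smul_left, hwu]
      have hSzero : ∀ z ∈ S.map ((fun v => QuadraticMap.polar (⇑Q) v u) ∘ g), z = 0 := by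
        intro z hz
        obtain ⟨w, hw, rfl⟩ := List.mem_map.mp hz
        have hwu : QuadraticMap.polar (⇑Q) w u = 0 := by
          rw [QuadraticMap.polar_comm]; exact hUs w hw
        simp only [Function.comp, hg]
        split_ifs with hcase
        · simp
        · simp [QuadraticMap.polar_smul_left, hwu]
      rw [List.sum_eq_zero hPzero, List.sum_eq_zero hSzero, zero_add, add_zero]
      simp only [Function.comp, hg, QuadraticMap.polar_smul_left, if_neg hQu,
        QuadraticMap.polar_self, smul_eq_mul, nsmul_eq_mul]
      push_cast
      field_simp
    rw [ha1, QuadraticMap.polar_sub_left, hsum, sub_self]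
  by_cases hall : ∀ u ∈ l, QuadraticMap.polar (⇑Q) a1 u = 0
  · refine ⟨a1 :: l, by simp, List.pairwise_cons.mpr ⟨hall, hl⟩, ?_⟩
    rw [← hwe1, wedgeF_ortho l a1 hall, List.map_cons, List.prod_cons]
  · push_neg at hall
    obtain ⟨u0, hu0, hp⟩ := hall
    have hQu0 : Q u0 = 0 := by
      by_contra h
      exact hp (hC1 u0 hu0 h)
    have hl0 := hl
    obtain ⟨P, S, rfl⟩ := List.append_of_mem hu0
    rw [List.pairwise_append] at hl
    obtain ⟨hP, hUS, hcross⟩ := hl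
    rw [List.pairwise_cons] at hUS
    obtain ⟨hu0S, hS⟩ := hUS
    have hu0P : ∀ v ∈ P, QuadraticMap.polar (⇑Q) u0 v = 0 := fun v hv => by
      rw [QuadraticMap.polar_comm]; exact hcross v hv u0 (List.mem_cons_self)
    set p : ℝ := QuadraticMap.polar (⇑Q) a1 u0 with hpdef
    set b : V := a1 - (Q a1 / p) • u0 with hb
    have hpb : QuadraticMap.polar (⇑Q) b u0 = p := by
      rw [hb, QuadraticMap.polar_sub_left, QuadraticMap.polar_smul_left,
        QuadraticMap.polar_self, hQu0]
      simp
      exact hpdef.symm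
    have hQb : Q b = 0 := by
      have hpol : QuadraticMap.polar (⇑Q) a1 (-((Q a1 / p) • u0))
          = Q (a1 + -((Q a1 / p) • u0)) - Q a1 - Q (-((Q a1 / p) • u0)) := rfl
      have h1 : Q (-((Q a1 / p) • u0)) = 0 := by
        rw [QuadraticMap.map_neg, QuadraticMap.map_smul, hQu0, smul_zero]
      have h2 : QuadraticMap.polar (⇑Q) a1 (-((Q a1 / p) • u0)) = -(Q a1 / p * p) := by
        rw [QuadraticMap.polar_neg_right, QuadraticMap.polar_smul_right, ← hpdef, smul_eq_mul]
      rw [hb, sub_eq_add_neg]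
      rw [h1, h2] at hpol
      have : Q (a1 + -((Q a1 / p) • u0)) = Q a1 - Q a1 / p * p := by linarith
      rw [this, div_mul_cancel₀ _ hp, sub_self]
    have hwe_b : wedgeF Q (P ++ u0 :: S) b = wedgeF Q (P ++ u0 :: S) a := by
      rw [hb, wedgeF_sub, wedgeF_smul, wedgeF_mem _ hl0 u0 hu0, smul_zero, sub_zero, hwe1]
    set e : V → V := fun v => v - (QuadraticMap.polar (⇑Q) b v / p) • u0 with he
    have hbe : ∀ v, QuadraticMap.polar (⇑Q) b (e v) = 0 := by
      intro v
      rw [he]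
      simp only [QuadraticMap.polar_sub_right, QuadraticMap.polar_smul_right, hpb, smul_eq_mul,
        div_mul_cancel₀ _ hp, sub_self]
    have heb : ∀ v, QuadraticMap.polar (⇑Q) (e v) b = 0 := fun v => by
      rw [QuadraticMap.polar_comm]; exact hbe v
    have hu0e : ∀ v, QuadraticMap.polar (⇑Q) u0 v = 0 →
        QuadraticMap.polar (⇑Q) u0 (e v) = 0 := by
      intro v hv
      rw [he]
      simp [QuadraticMap.polar_sub_right, QuadraticMap.polar_smul_right,
        QuadraticMap.polar_self, hQu0, hv]
    have heu0 : ∀ v, QuadraticMap.polar (⇑Q) u0 v = 0 →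
        QuadraticMap.polar (⇑Q) (e v) u0 = 0 := fun v hv => by
      rw [QuadraticMap.polar_comm]; exact hu0e v hv
    have hee : ∀ v w, QuadraticMap.polar (⇑Q) u0 v = 0 → QuadraticMap.polar (⇑Q) u0 w = 0 →
        QuadraticMap.polar (⇑Q) v w = 0 → QuadraticMap.polar (⇑Q) (e v) (e w) = 0 := by
      intro v w hv hw hvw
      rw [he]
      simp only [QuadraticMap.polar_sub_left, QuadraticMap.polar_sub_right,
        QuadraticMap.polar_smul_left, QuadraticMap.polar_smul_right, QuadraticMap.polar_self,
        hQu0, smul_eq_mul, hvw]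
      have hvu0 : QuadraticMap.polar (⇑Q) v u0 = 0 := by
        rw [QuadraticMap.polar_comm]; exact hv
      rw [hw, hvu0]
      ring
    set d0 : V := (2⁻¹ : ℝ) • b + u0 with hd0
    set u0' : V := u0 - (2⁻¹ : ℝ) • b with hu0'
    have hd0v : ∀ v, QuadraticMap.polar (⇑Q) u0 v = 0 →
        QuadraticMap.polar (⇑Q) d0 (e v) = 0 := by
      intro v hv
      rw [hd0, QuadraticMap.polar_add_left, QuadraticMap.polar_smul_left, hbe v, hu0e v hv]
      simp
    have hpbu0 : QuadraticMap.polar (⇑Q) u0 b = p := by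
      rw [QuadraticMap.polar_comm]; exact hpb
    have hd0u0' : QuadraticMap.polar (⇑Q) d0 u0' = 0 := by
      simp only [hd0, hu0', QuadraticMap.polar_add_left, QuadraticMap.polar_sub_right,
        QuadraticMap.polar_smul_left, QuadraticMap.polar_smul_right, QuadraticMap.polar_self,
        hQb, hQu0, hpb, hpbu0, smul_eq_mul]
      ring
    have hu0'v : ∀ v, QuadraticMap.polar (⇑Q) u0 v = 0 →
        QuadraticMap.polar (⇑Q) u0' (e v) = 0 := by
      intro v hv
      rw [hu0', QuadraticMap.polar_sub_left, QuadraticMap.polar_smul_left, hu0e v hv, hbe v]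
      simp
    refine ⟨d0 :: (P.map e ++ u0' :: S.map e), ?_, ?_, ?_⟩
    · simp [List.length_append]
    · refine List.pairwise_cons.mpr ⟨?_, ?_⟩
      · intro v hv
        rcases List.mem_append.mp hv with hv | hv
        · obtain ⟨w, hw, rfl⟩ := List.mem_map.mp hv
          exact hd0v w (hu0P w hw)
        · rcases List.mem_cons.mp hv with rfl | hv
          · exact hd0u0'
          · obtain ⟨w, hw, rfl⟩ := List.mem_map.mp hv
            exact hd0v w (hu0S w hw)
      · refine List.pairwise_append.mpr ⟨?_, ?_, ?_⟩
        · refine List.pairwise_map.mpr (hP.imp_of_mem ?_)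
          intro x y hx hy hxy
          exact hee x y (hu0P x hx) (hu0P y hy) hxy
        · refine List.pairwise_cons.mpr ⟨?_, ?_⟩
          · intro v hv
            obtain ⟨w, hw, rfl⟩ := List.mem_map.mp hv
            exact hu0'v w (hu0S w hw)
          · refine List.pairwise_map.mpr (hS.imp_of_mem ?_)
            intro x y hx hy hxy
            exact hee x y (hu0S x hx) (hu0S y hy) hxy
        · intro x hx y hy
          obtain ⟨w, hw, rfl⟩ := List.mem_map.mp hx
          rcases List.mem_cons.mp hy with rfl | hy
          · rw [hu0', QuadraticMap.polar_sub_right, QuadraticMap.polar_smul_right,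
              heu0 w (hu0P w hw), heb w]
            simp
          · obtain ⟨z, hz, rfl⟩ := List.mem_map.mp hy
            exact hee w z (hu0P w hw) (hu0S z hz) (hcross w hw z (List.mem_cons_of_mem _ hz))
    · have hxsq : ι Q u0 * ι Q u0 = 0 := by rw [ι_sq_scalar, hQu0, map_zero]
      have hysq : ι Q b * ι Q b = 0 := by rw [ι_sq_scalar, hQb, map_zero]
      have hxPL : ∀ z ∈ P.map (ι Q), ι Q u0 * z = -(z * ι Q u0) := by
        intro z hz
        obtain ⟨w, hw, rfl⟩ := List.mem_map.mp hz
        exact ac_of_polar (hu0P w hw)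
      have hxSL : ∀ z ∈ S.map (ι Q), ι Q u0 * z = -(z * ι Q u0) := by
        intro z hz
        obtain ⟨w, hw, rfl⟩ := List.mem_map.mp hz
        exact ac_of_polar (hu0S w hw)
      have haddmul : ∀ v : V, AddMul (ι Q u0) (ι Q v) (ι Q (e v)) := by
        intro v
        refine ⟨-(QuadraticMap.polar (⇑Q) b v / p), ?_⟩
        rw [he]
        simp only [map_sub, map_smul, neg_smul, sub_eq_add_neg, map_add, map_neg]
      have hF_P : List.Forall₂ (AddMul (ι Q u0)) (P.map (ι Q)) ((P.map e).map (ι Q)) := by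
        rw [List.map_map, List.forall₂_map_right_iff, List.forall₂_map_left_iff,
          List.forall₂_same]
        intro v _
        exact haddmul v
      have hF_S : List.Forall₂ (AddMul (ι Q u0)) (S.map (ι Q)) ((S.map e).map (ι Q)) := by
        rw [List.map_map, List.forall₂_map_right_iff, List.forall₂_map_left_iff,
          List.forall₂_same]
        intro v _
        exact haddmul v
      have hprodPS : ((P.map e).map (ι Q)).prod * (ι Q u0 * ((S.map e).map (ι Q)).prod)
          = (P.map (ι Q)).prod * (ι Q u0 * (S.map (ι Q)).prod) := by
        rw [mod_left (ι Q u0) hxsq hF_P hxPL _, mod_right (ι Q u0) hxsq hF_S hxSL]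
      have hsplitA : ((P ++ u0 :: S).map (ι Q)).prod
          = (P.map (ι Q)).prod * (ι Q u0 * (S.map (ι Q)).prod) := by
        simp [List.prod_append, mul_assoc]
      have hxPe : ∀ z ∈ (P.map e).map (ι Q), ι Q u0 * z = -(z * ι Q u0) := by
        intro z hz
        obtain ⟨w, hw, rfl⟩ := List.mem_map.mp hz
        obtain ⟨w', hw', rfl⟩ := List.mem_map.mp hw
        exact ac_of_polar (hu0e w' (hu0P w' hw'))
      have hyPe : ∀ z ∈ (P.map e).map (ι Q), ι Q b * z = -(z * ι Q b) := by
        intro z hz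
        obtain ⟨w, hw, rfl⟩ := List.mem_map.mp hz
        obtain ⟨w', _, rfl⟩ := List.mem_map.mp hw
        exact ac_of_polar (hbe w')
      have hySe : ∀ z ∈ (S.map e).map (ι Q), ι Q b * z = -(z * ι Q b) := by
        intro z hz
        obtain ⟨w, hw, rfl⟩ := List.mem_map.mp hz
        obtain ⟨w', _, rfl⟩ := List.mem_map.mp hw
        exact ac_of_polar (hbe w')
      have hlen : (P ++ u0 :: S).length
          = ((P.map e).map (ι Q)).length + (((S.map e).map (ι Q)).length + 1) := by
        simp [List.length_append]
      have hm : ((d0 :: (P.map e ++ u0' :: S.map e)).map (ι Q)).prod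
          = ((2⁻¹:ℝ) • ι Q b + ι Q u0) * (((P.map e).map (ι Q)).prod *
            ((ι Q u0 - (2⁻¹:ℝ) • ι Q b) * ((S.map e).map (ι Q)).prod)) := by
        simp only [List.map_cons, List.map_append, List.prod_cons, List.prod_append,
          List.map_cons, List.prod_cons]
        rw [hd0, hu0', map_add, map_sub, map_smul]
      rw [← hwe_b, hm]
      simp only [wedgeF]
      rw [hsplitA, ← hprodPS, hlen]
      exact final_calc (ι Q u0) (ι Q b) _ _ hxsq hysq hxPe hyPe hySe

end bladelist

/-- The outer product `a ∧ A = ½(ι a * A + (−1)^r • (A * ι a))` of a vector `a` and an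
`r`-blade `A` (an ordered product of `r` pairwise anticommuting vectors) is an
`(r+1)`-blade, in any signature, including degenerate ones. -/
theorem outer_product_is_blade
    {V : Type*} [AddCommGroup V] [Module ℝ V] (Q : QuadraticForm ℝ V)
    (r : ℕ) (c : Fin r → V)
    (hc : ∀ i j, i ≠ j → ι Q (c i) * ι Q (c j) = -(ι Q (c j) * ι Q (c i)))
    (a : V) :
    (2⁻¹ : ℝ) • (ι Q a * (List.ofFn fun i => ι Q (c i)).prod +
        ((-1 : ℝ) ^ r) • ((List.ofFn fun i => ι Q (c i)).prod * ι Q a)) = 0 ∨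
    ∃ d : Fin (r + 1) → V,
      (∀ i j, i ≠ j → ι Q (d i) * ι Q (d j) = -(ι Q (d j) * ι Q (d i))) ∧
      (2⁻¹ : ℝ) • (ι Q a * (List.ofFn fun i => ι Q (c i)).prod +
          ((-1 : ℝ) ^ r) • ((List.ofFn fun i => ι Q (c i)).prod * ι Q a)) =
        (List.ofFn fun i => ι Q (d i)).prod := by
  have hlp : (List.ofFn c).Pairwise (fun u v => QuadraticMap.polar (⇑Q) u v = 0) := by
    rw [List.pairwise_ofFn]
    intro i j hij
    exact polar_of_ac (hc i j (ne_of_lt hij))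
  obtain ⟨m, hmlen, hmp, hmeq⟩ := blade_list (List.ofFn c) hlp a
  have hr : m.length = r + 1 := by simpa using hmlen
  have hwedge : wedgeF Q (List.ofFn c) a
      = (2⁻¹ : ℝ) • (ι Q a * (List.ofFn fun i => ι Q (c i)).prod +
        ((-1 : ℝ) ^ r) • ((List.ofFn fun i => ι Q (c i)).prod * ι Q a)) := by
    simp only [wedgeF, List.map_ofFn, List.length_ofFn]
    rfl
  refine Or.inr ⟨fun i => m.get (Fin.cast hr.symm i), ?_, ?_⟩
  · intro i j hij
    have hpg := List.pairwise_iff_getElem.mp hmp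
    rcases Ne.lt_or_gt hij with h | h
    · exact ac_of_polar (hpg i j (by omega) (by omega) (by exact_mod_cast h))
    · have := hpg j i (by omega) (by omega) (by exact_mod_cast h)
      rw [QuadraticMap.polar_comm] at this
      exact ac_of_polar this
  · rw [← hwedge, hmeq]
    congr 1
    apply List.ext_getElem
    · simp [hr]
    · intro k hk1 hk2
      simp only [List.getElem_map, List.getElem_ofFn, List.get_eq_getElem, Fin.coe_cast]
end

section
/- Fix natural numbers p, q, r. Let Q be the quadratic form on Fin (p+q+r) → ℝ given as the weighted sum of squares with weights w i = 1 for i < p, w i = −1 for p ≤ i < p+q, and w i = 0 for p+q ≤ i (signature (p,q,r)), and let Q' be the quadratic form on Fin (p+r+q+r) → ℝ given as the weighted sum of squares with weights 1 for the first p+r indices and −1 for the last q+r indices (nondegenerate signature (p+r, q+r)). Then there exists an injective ℝ-algebra homomorphism from the Clifford algebra Cl(Q) to the Clifford algebra Cl(Q'). (Every degenerate Clifford algebra ℝ_{p,q,r} embeds as a subalgebra of the nondegenerate Clifford algebra ℝ_{p+r,q+r,0}, via the e-LIFT sending the i-th null basis vector to e_{p+i} + f_{q+i}.) -/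
open CliffordAlgebra

namespace DegenEmbedAux

variable {R : Type*} [CommRing R] {M M' : Type*} [AddCommGroup M] [AddCommGroup M']
  [Module R M] [Module R M']

theorem contractLeft_map {Q : QuadraticForm R M} {Q' : QuadraticForm R M'}
    (m : Q →qᵢ Q') (d' : Module.Dual R M') (x : CliffordAlgebra Q) :
    contractLeft d' (CliffordAlgebra.map m x)
      = CliffordAlgebra.map m (contractLeft (d' ∘ₗ m.toLinearMap) x) := by
  induction' x using CliffordAlgebra.left_induction with s x y hx hy x v hx
  · simp
  · simp only [map_add, hx, hy]
  · rw [map_mul, map_apply_ι, contractLeft_ι_mul, contractLeft_ι_mul, map_sub, map_smul,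
      map_mul, map_apply_ι, hx]
    congr 1

theorem map_changeForm {Q Qz : QuadraticForm R M} {Q' Qz' : QuadraticForm R M'}
    {B : LinearMap.BilinForm R M} {B' : LinearMap.BilinForm R M'}
    (h : B.toQuadraticMap = Qz - Q) (h' : B'.toQuadraticMap = Qz' - Q')
    (m : Q →qᵢ Q') (mz : Qz →qᵢ Qz') (hm : (mz.toLinearMap : M →ₗ[R] M') = m.toLinearMap)
    (hB : ∀ u v, B' (m u) (m v) = B u v) (x : CliffordAlgebra Q) :
    changeForm h' (CliffordAlgebra.map m x)
      = CliffordAlgebra.map mz (changeForm h x) := by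
  induction' x using CliffordAlgebra.left_induction with s x y hx hy x v hx
  · simp
  · simp only [map_add, hx, hy]
  · rw [map_mul, map_apply_ι, changeForm_ι_mul, changeForm_ι_mul, map_sub, map_mul,
      map_apply_ι, hx, contractLeft_map]
    have h1 : (mz v : M') = m v := LinearMap.congr_fun hm v
    have h2 : (B' (m v)) ∘ₗ mz.toLinearMap = B v := by
      ext u
      have huv : (mz u : M') = m u := LinearMap.congr_fun hm u
      simp [huv, hB]
    rw [h1, h2]

def sigN (p q r j : ℕ) : ℕ :=
  if j < p then j else if j < p + r then p + q + (j - p)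
  else if j < p + r + q then j - r else p + q + (j - (p + r + q))

def tauN (p q r i : ℕ) : ℕ :=
  if i < p then i else if i < p + q then i + r else p + (i - (p + q))

def sigF (p q r : ℕ) (j : Fin (p + r + q + r)) : Fin (p + q + r) :=
  ⟨sigN p q r j, by have := j.2; unfold sigN; split_ifs <;> omega⟩

def tauF (p q r : ℕ) (i : Fin (p + q + r)) : Fin (p + r + q + r) :=
  ⟨tauN p q r i, by have := i.2; unfold tauN; split_ifs <;> omega⟩

lemma sig_tau (p q r : ℕ) (i : Fin (p + q + r)) : sigF p q r (tauF p q r i) = i := by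
  have := i.2
  ext
  simp only [sigF, tauF, sigN, tauN]
  split_ifs <;> omega

open Finset in
lemma key (p q r : ℕ) (x : Fin (p + q + r) → ℝ) :
    QuadraticMap.weightedSumSquares ℝ
        (fun i : Fin (p + r + q + r) => if (i : ℕ) < p + r then (1 : ℝ) else -1)
        (LinearMap.funLeft ℝ ℝ (sigF p q r) x)
      = QuadraticMap.weightedSumSquares ℝ
        (fun i : Fin (p + q + r) =>
          if (i : ℕ) < p then (1 : ℝ) else if (i : ℕ) < p + q then -1 else 0) x := by
  classical
  rw [QuadraticMap.weightedSumSquares_apply, QuadraticMap.weightedSumSquares_apply]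
  set X : ℕ → ℝ := fun i => if h : i < p + q + r then x ⟨i, h⟩ else 0 with hX
  set g : ℕ → ℝ := fun j =>
    (if j < p + r then (1 : ℝ) else -1) * (X (sigN p q r j) * X (sigN p q r j)) with hg
  set gR : ℕ → ℝ := fun i =>
    (if i < p then (1 : ℝ) else if i < p + q then -1 else 0) * (X i * X i) with hgR
  have hL : (∑ j : Fin (p + r + q + r),
      (if (j : ℕ) < p + r then (1 : ℝ) else -1) •
        (LinearMap.funLeft ℝ ℝ (sigF p q r) x j * LinearMap.funLeft ℝ ℝ (sigF p q r) x j))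
      = ∑ j ∈ range (p + r + q + r), g j := by
    rw [← Fin.sum_univ_eq_sum_range]
    refine Finset.sum_congr rfl fun j _ => ?_
    have hx : LinearMap.funLeft ℝ ℝ (sigF p q r) x j = X (sigN p q r (j : ℕ)) := by
      rw [LinearMap.funLeft_apply, hX]
      beta_reduce
      rw [dif_pos (show sigN p q r (j : ℕ) < p + q + r from (sigF p q r j).2)]
      rfl
    rw [smul_eq_mul, hg, hx]
  have hR : (∑ i : Fin (p + q + r),
      (if (i : ℕ) < p then (1 : ℝ) else if (i : ℕ) < p + q then -1 else 0) • (x i * x i))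
      = ∑ i ∈ range (p + q + r), gR i := by
    rw [← Fin.sum_univ_eq_sum_range]
    refine Finset.sum_congr rfl fun i _ => ?_
    have hx : x i = X (i : ℕ) := by rw [hX]; beta_reduce; rw [dif_pos (show (i : ℕ) < p + q + r from i.2)]
    rw [smul_eq_mul, hgR, hx]
  rw [hL, hR]
  -- split LHS
  have e1 : ∑ j ∈ range (p + r + q + r), g j
      = ((∑ j ∈ Ico 0 p, g j + ∑ j ∈ Ico p (p + r), g j) + ∑ j ∈ Ico (p + r) (p + r + q), g j)
        + ∑ j ∈ Ico (p + r + q) (p + r + q + r), g j := by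
    rw [range_eq_Ico, ← sum_Ico_consecutive g (by omega : 0 ≤ p + r + q)
      (by omega : p + r + q ≤ p + r + q + r),
      ← sum_Ico_consecutive g (by omega : 0 ≤ p + r) (by omega : p + r ≤ p + r + q),
      ← sum_Ico_consecutive g (by omega : 0 ≤ p) (by omega : p ≤ p + r)]
  have e2 : ∑ i ∈ range (p + q + r), gR i
      = (∑ i ∈ Ico 0 p, gR i + ∑ i ∈ Ico p (p + q), gR i)
        + ∑ i ∈ Ico (p + q) (p + q + r), gR i := by
    rw [range_eq_Ico, ← sum_Ico_consecutive gR (by omega : 0 ≤ p + q)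
      (by omega : p + q ≤ p + q + r),
      ← sum_Ico_consecutive gR (by omega : 0 ≤ p) (by omega : p ≤ p + q)]
  rw [e1, e2]
  have A1 : ∑ j ∈ Ico 0 p, g j = ∑ i ∈ range p, X i * X i := by
    rw [← range_eq_Ico]
    refine Finset.sum_congr rfl fun i hi => ?_
    rw [mem_range] at hi
    have hs : sigN p q r i = i := by unfold sigN; split_ifs <;> omega
    rw [hg]; simp only
    rw [hs, if_pos (by omega), one_mul]
  have A2 : ∑ j ∈ Ico p (p + r), g j = ∑ i ∈ range r, X (p + q + i) * X (p + q + i) := by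
    rw [sum_Ico_eq_sum_range, Nat.add_sub_cancel_left]
    refine Finset.sum_congr rfl fun i hi => ?_
    rw [mem_range] at hi
    have hs : sigN p q r (p + i) = p + q + i := by unfold sigN; split_ifs <;> omega
    rw [hg]; simp only
    rw [hs, if_pos (by omega), one_mul]
  have A3 : ∑ j ∈ Ico (p + r) (p + r + q), g j
      = -∑ i ∈ range q, X (p + i) * X (p + i) := by
    rw [sum_Ico_eq_sum_range, Nat.add_sub_cancel_left, ← Finset.sum_neg_distrib]
    refine Finset.sum_congr rfl fun i hi => ?_
    rw [mem_range] at hi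
    have hs : sigN p q r (p + r + i) = p + i := by unfold sigN; split_ifs <;> omega
    rw [hg]; simp only
    rw [hs, if_neg (by omega)]
    ring
  have A4 : ∑ j ∈ Ico (p + r + q) (p + r + q + r), g j
      = -∑ i ∈ range r, X (p + q + i) * X (p + q + i) := by
    rw [sum_Ico_eq_sum_range, Nat.add_sub_cancel_left, ← Finset.sum_neg_distrib]
    refine Finset.sum_congr rfl fun i hi => ?_
    rw [mem_range] at hi
    have hs : sigN p q r (p + r + q + i) = p + q + i := by unfold sigN; split_ifs <;> omega
    rw [hg]; simp only
    rw [hs, if_neg (by omega)]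
    ring
  have B1 : ∑ i ∈ Ico 0 p, gR i = ∑ i ∈ range p, X i * X i := by
    rw [← range_eq_Ico]
    refine Finset.sum_congr rfl fun i hi => ?_
    rw [mem_range] at hi
    rw [hgR]; simp only
    rw [if_pos (by omega), one_mul]
  have B2 : ∑ i ∈ Ico p (p + q), gR i = -∑ i ∈ range q, X (p + i) * X (p + i) := by
    rw [sum_Ico_eq_sum_range, Nat.add_sub_cancel_left, ← Finset.sum_neg_distrib]
    refine Finset.sum_congr rfl fun i hi => ?_
    rw [mem_range] at hi
    rw [hgR]; simp only
    rw [if_neg (by omega), if_pos (by omega)]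
    ring
  have B3 : ∑ i ∈ Ico (p + q) (p + q + r), gR i = 0 := by
    refine Finset.sum_eq_zero fun i hi => ?_
    rw [mem_Ico] at hi
    rw [hgR]; simp only
    rw [if_neg (by omega), if_neg (by omega), zero_mul]
  rw [A1, A2, A3, A4, B1, B2, B3]
  ring

end DegenEmbedAux

/-- Every (possibly degenerate) Clifford algebra `ℝ_{p,q,r}` embeds as a subalgebra of the
nondegenerate Clifford algebra `ℝ_{p+r,q+r,0}`: there is an injective ℝ-algebra
homomorphism from the Clifford algebra of the diagonal quadratic form of signature
`(p,q,r)` to that of the diagonal form of signature `(p+r, q+r)`. -/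
theorem degenerate_clifford_embeds
    (p q r : ℕ) :
    ∃ f : CliffordAlgebra (QuadraticMap.weightedSumSquares ℝ
          (fun i : Fin (p + q + r) =>
            if (i : ℕ) < p then (1 : ℝ) else if (i : ℕ) < p + q then -1 else 0)) →ₐ[ℝ]
        CliffordAlgebra (QuadraticMap.weightedSumSquares ℝ
          (fun i : Fin (p + r + q + r) =>
            if (i : ℕ) < p + r then (1 : ℝ) else -1)),
      Function.Injective f := by
  classical
  set Q : QuadraticForm ℝ (Fin (p + q + r) → ℝ) :=
    QuadraticMap.weightedSumSquares ℝ
      (fun i : Fin (p + q + r) =>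
        if (i : ℕ) < p then (1 : ℝ) else if (i : ℕ) < p + q then -1 else 0) with hQ
  set Q' : QuadraticForm ℝ (Fin (p + r + q + r) → ℝ) :=
    QuadraticMap.weightedSumSquares ℝ
      (fun i : Fin (p + r + q + r) =>
        if (i : ℕ) < p + r then (1 : ℝ) else -1) with hQ'
  -- the isometry
  let m : Q →qᵢ Q' :=
    { toLinearMap := LinearMap.funLeft ℝ ℝ (DegenEmbedAux.sigF p q r)
      map_app' := fun x => DegenEmbedAux.key p q r x }
  -- zero-form isometries
  let m₀ : (0 : QuadraticForm ℝ (Fin (p + q + r) → ℝ)) →qᵢ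
      (0 : QuadraticForm ℝ (Fin (p + r + q + r) → ℝ)) :=
    { toLinearMap := LinearMap.funLeft ℝ ℝ (DegenEmbedAux.sigF p q r)
      map_app' := fun _ => rfl }
  let g₀ : (0 : QuadraticForm ℝ (Fin (p + r + q + r) → ℝ)) →qᵢ
      (0 : QuadraticForm ℝ (Fin (p + q + r) → ℝ)) :=
    { toLinearMap := LinearMap.funLeft ℝ ℝ (DegenEmbedAux.tauF p q r)
      map_app' := fun _ => rfl }
  have hli : Function.LeftInverse g₀ m₀ := by
    intro x
    show LinearMap.funLeft ℝ ℝ (DegenEmbedAux.tauF p q r)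
      (LinearMap.funLeft ℝ ℝ (DegenEmbedAux.sigF p q r) x) = x
    funext k
    simp only [LinearMap.funLeft_apply, Function.comp]
    rw [DegenEmbedAux.sig_tau]
  have hinj₀ : Function.Injective (CliffordAlgebra.map m₀) :=
    (CliffordAlgebra.leftInverse_map_of_leftInverse m₀ g₀ hli).injective
  -- compatibility of the associated bilinear forms
  have hB : ∀ u v, QuadraticMap.associated (R := ℝ) (-Q') (m u) (m v)
      = QuadraticMap.associated (R := ℝ) (-Q) u v := by
    intro u v
    simp only [QuadraticMap.associated_apply]
    congr 1
    rw [← map_add m u v]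
    simp only [QuadraticMap.neg_apply, m.map_app]
  have hnat : ∀ x, changeForm (changeForm.associated_neg_proof (Q := Q'))
        (CliffordAlgebra.map m x)
      = CliffordAlgebra.map m₀
        (changeForm (changeForm.associated_neg_proof (Q := Q)) x) :=
    DegenEmbedAux.map_changeForm _ _ m m₀ rfl hB
  refine ⟨CliffordAlgebra.map m, fun a b hab => ?_⟩
  have h1 : CliffordAlgebra.map m₀
        (changeForm (changeForm.associated_neg_proof (Q := Q)) a)
      = CliffordAlgebra.map m₀
        (changeForm (changeForm.associated_neg_proof (Q := Q)) b) := by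
    rw [← hnat, ← hnat, hab]
  have h2 := hinj₀ h1
  exact (changeFormEquiv (changeForm.associated_neg_proof (Q := Q))).injective h2
end
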